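/- arXiv:1506.01610 — 8 statements merged into one kernel-verified Lean document; each statement's English description precedes it below -/
import Mathlib

section
/- Let H be an n×n real symmetric matrix with eigenvalues λ_1 ≤ ⋯ ≤ λ_n (counted with multiplicity) and corresponding orthonormal eigenvectors φ_1, …, φ_n, let 1 ≤ N < n, and assume λ_N < λ_{N+1}. Set P_∞ = Σ_{i=1}^N φ_iφ_iᵀ. If η > 0 and P_η ∈ C_N minimizes P ↦ tr(HP) + η⁻¹‖P‖₁ over C_N, then ‖P_η − P_∞‖_F² ≤ (2/η) · ‖P_∞‖₁ / (λ_{N+1} − λ_N). -/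
open Matrix BigOperators

/-- Entrywise ℓ¹ norm of a real matrix. -/
noncomputable def l1Norm {n : ℕ} (P : Matrix (Fin n) (Fin n) ℝ) : ℝ :=
  ∑ i, ∑ j, |P i j|

/-- Square of the Frobenius norm of a real matrix. -/
noncomputable def frobSq {n : ℕ} (P : Matrix (Fin n) (Fin n) ℝ) : ℝ :=
  ∑ i, ∑ j, (P i j) ^ 2

/-- The convex set of admissible density matrices: symmetric, trace `N`,
with both `P` and `1 - P` positive semidefinite. -/
def CN (n N : ℕ) : Set (Matrix (Fin n) (Fin n) ℝ) :=
  {P | P.IsSymm ∧ P.trace = (N : ℝ) ∧ P.PosSemidef ∧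
    ((1 : Matrix (Fin n) (Fin n) ℝ) - P).PosSemidef}

/-! Let `q i = φ i ⬝ᵥ (Pη *ᵥ φ i)` be the diagonal of `Pη` in the eigenbasis; then
`0 ≤ q i ≤ 1` and `∑ q i = N`. Since `tr(Pη²) ≤ tr Pη = N`, expanding the square gives
`‖Pη - P∞‖_F² ≤ 2 (N - ∑_{i<N} q i)`. On the other hand the weight `N - ∑_{i<N} q i` that `Pη`
moves out of the lowest `N` levels lands above the gap, so
`tr(H Pη) - tr(H P∞) ≥ (λ_{N+1} - λ_N) (N - ∑_{i<N} q i)`. Finally, comparing the objective at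
`Pη` with its value at `P∞ ∈ C_N` bounds this trace difference by `η⁻¹ ‖P∞‖₁`. -/

open scoped MatrixOrder in
theorem Matrix.PosSemidef.trace_mul_nonneg {m : Type*} [Fintype m] [DecidableEq m]
    {A B : Matrix m m ℝ} (hA : A.PosSemidef) (hB : B.PosSemidef) : 0 ≤ (A * B).trace := by
  obtain ⟨C, rfl⟩ := CStarAlgebra.nonneg_iff_eq_star_mul_self.mp hA.nonneg
  rw [star_eq_conjTranspose, Matrix.mul_assoc, trace_mul_comm]
  exact (hB.mul_mul_conjTranspose_same C).trace_nonneg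

theorem frobSq_eq_trace_transpose_mul {n : ℕ} (A : Matrix (Fin n) (Fin n) ℝ) :
    frobSq A = (Aᵀ * A).trace := by
  rw [frobSq, trace, Finset.sum_comm]
  simp [mul_apply, sq]

theorem trace_mul_self_le_of_mem_CN {n N : ℕ} {P : Matrix (Fin n) (Fin n) ℝ}
    (hP : P ∈ CN n N) : (P * P).trace ≤ N := by
  obtain ⟨-, htr, h0, h1⟩ := hP
  have := h0.trace_mul_nonneg h1
  rw [Matrix.mul_sub, Matrix.mul_one, trace_sub, htr] at this
  linarith

theorem frobSq_sub_le_of_mem_CN {n N : ℕ} {P R : Matrix (Fin n) (Fin n) ℝ}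
    (hP : P ∈ CN n N) (hR : R.IsSymm) (hRR : (R * R).trace = N) :
    frobSq (P - R) ≤ 2 * (N - (R * P).trace) := by
  have hPR : (P - R)ᵀ = P - R := by rw [transpose_sub, hP.1.eq, hR.eq]
  have hexp : (P - R) * (P - R) = P * P - P * R - R * P + R * R := by noncomm_ring
  rw [frobSq_eq_trace_transpose_mul, hPR, hexp, trace_add, trace_sub, trace_sub,
    trace_mul_comm P R, hRR]
  linarith [trace_mul_self_le_of_mem_CN hP]

theorem gap_mul_le_sum_mul_sub_sum {ι : Type*} [Fintype ι] [DecidableEq ι] (s : Finset ι)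
    {lam q : ι → ℝ} {μ ν : ℝ} (hlow : ∀ i ∈ s, lam i ≤ μ) (hhigh : ∀ i ∉ s, ν ≤ lam i)
    (hq0 : ∀ i, 0 ≤ q i) (hq1 : ∀ i, q i ≤ 1) (hsum : ∑ i, q i = s.card) :
    (ν - μ) * (s.card - ∑ i ∈ s, q i) ≤ ∑ i, lam i * q i - ∑ i ∈ s, lam i := by
  have hcompl : ∑ i ∈ sᶜ, q i = s.card - ∑ i ∈ s, q i := by
    rw [← hsum, ← Finset.sum_add_sum_compl s]; ring
  have hin : ∑ i ∈ s, μ * (q i - 1) ≤ ∑ i ∈ s, lam i * (q i - 1) :=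
    Finset.sum_le_sum fun i hi => mul_le_mul_of_nonpos_right (hlow i hi) (by linarith [hq1 i])
  have hout : ∑ i ∈ sᶜ, ν * q i ≤ ∑ i ∈ sᶜ, lam i * q i :=
    Finset.sum_le_sum fun i hi =>
      mul_le_mul_of_nonneg_right (hhigh i (Finset.mem_compl.mp hi)) (hq0 i)
  rw [← Finset.mul_sum, Finset.sum_sub_distrib, Finset.sum_const, nsmul_one] at hin
  rw [← Finset.mul_sum, hcompl] at hout
  rw [← Finset.sum_add_sum_compl s (fun i => lam i * q i)]
  simp only [mul_sub, mul_one, Finset.sum_sub_distrib] at hin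
  linarith

theorem l1Norm_nonneg {n : ℕ} (P : Matrix (Fin n) (Fin n) ℝ) : 0 ≤ l1Norm P :=
  Finset.sum_nonneg fun _ _ => Finset.sum_nonneg fun _ _ => abs_nonneg _

theorem trace_vecMulVec_self_mul {m : Type*} [Fintype m] (v : m → ℝ) (X : Matrix m m ℝ) :
    (vecMulVec v v * X).trace = v ⬝ᵥ (X *ᵥ v) := by
  rw [vecMulVec_mul, trace_vecMulVec, dotProduct_mulVec, dotProduct_comm]

theorem trace_sum_vecMulVec_self_mul {ι m : Type*} [Fintype m] (s : Finset ι)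
    (φ : ι → m → ℝ) (X : Matrix m m ℝ) :
    ((∑ i ∈ s, vecMulVec (φ i) (φ i)) * X).trace = ∑ i ∈ s, φ i ⬝ᵥ (X *ᵥ φ i) := by
  simp only [Finset.sum_mul, trace_sum, trace_vecMulVec_self_mul]

theorem dotProduct_mulVec_mem_Icc {m : Type*} [Fintype m] [DecidableEq m]
    {P : Matrix m m ℝ} (h0 : P.PosSemidef) (h1 : (1 - P).PosSemidef) {v : m → ℝ}
    (hv : v ⬝ᵥ v = 1) : v ⬝ᵥ (P *ᵥ v) ∈ Set.Icc 0 1 := by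
  have hlow := h0.dotProduct_mulVec_nonneg v
  have hup := h1.dotProduct_mulVec_nonneg v
  rw [star_trivial] at hlow hup
  rw [sub_mulVec, one_mulVec, dotProduct_sub, hv] at hup
  exact ⟨hlow, by linarith⟩

section Orthonormal

variable {ι : Type*} [Fintype ι] [DecidableEq ι] {φ : ι → ι → ℝ}

theorem sum_vecMulVec_self_eq_one (horth : ∀ i j, φ i ⬝ᵥ φ j = if i = j then 1 else 0) :
    ∑ i, vecMulVec (φ i) (φ i) = 1 := by
  let U : Matrix ι ι ℝ := of fun a i => φ i a
  have hUtU : Uᵀ * U = 1 := by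
    ext i j
    rw [one_apply, ← horth i j]
    rfl
  ext a b
  rw [← mul_eq_one_comm.mp hUtU]
  simp [U, mul_apply, Matrix.sum_apply, vecMulVec_apply]

theorem sum_dotProduct_mulVec_eq_trace
    (horth : ∀ i j, φ i ⬝ᵥ φ j = if i = j then 1 else 0) (X : Matrix ι ι ℝ) :
    ∑ i, φ i ⬝ᵥ (X *ᵥ φ i) = X.trace := by
  rw [← trace_sum_vecMulVec_self_mul, sum_vecMulVec_self_eq_one horth, Matrix.one_mul]

theorem trace_mul_eq_sum_of_mulVec_eq
    (horth : ∀ i j, φ i ⬝ᵥ φ j = if i = j then 1 else 0) {H : Matrix ι ι ℝ} {lam : ι → ℝ}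
    (heig : ∀ i, H *ᵥ φ i = lam i • φ i) (X : Matrix ι ι ℝ) :
    (H * X).trace = ∑ i, lam i * (φ i ⬝ᵥ (X *ᵥ φ i)) := by
  rw [trace_mul_comm, ← sum_dotProduct_mulVec_eq_trace horth]
  simp only [← mulVec_mulVec, heig, mulVec_smul, dotProduct_smul, smul_eq_mul]

theorem sum_vecMulVec_self_mulVec_of_mem
    (horth : ∀ i j, φ i ⬝ᵥ φ j = if i = j then 1 else 0) {s : Finset ι} {j : ι} (hj : j ∈ s) :
    (∑ i ∈ s, vecMulVec (φ i) (φ i)) *ᵥ φ j = φ j := by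
  simp [sum_mulVec, vecMulVec_mulVec, horth, hj]

theorem trace_sum_vecMulVec_self_mul_self
    (horth : ∀ i j, φ i ⬝ᵥ φ j = if i = j then 1 else 0) (s : Finset ι) :
    ((∑ i ∈ s, vecMulVec (φ i) (φ i)) * ∑ i ∈ s, vecMulVec (φ i) (φ i)).trace = s.card := by
  rw [trace_sum_vecMulVec_self_mul, ← nsmul_one, ← Finset.sum_const]
  refine Finset.sum_congr rfl fun i hi => ?_
  rw [sum_vecMulVec_self_mulVec_of_mem horth hi, horth, if_pos rfl]

theorem trace_mul_sum_vecMulVec_self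
    (horth : ∀ i j, φ i ⬝ᵥ φ j = if i = j then 1 else 0) {H : Matrix ι ι ℝ} {lam : ι → ℝ}
    (heig : ∀ i, H *ᵥ φ i = lam i • φ i) (s : Finset ι) :
    (H * ∑ i ∈ s, vecMulVec (φ i) (φ i)).trace = ∑ i ∈ s, lam i := by
  rw [trace_mul_comm, trace_sum_vecMulVec_self_mul]
  simp [heig, horth]

theorem gap_mul_le_trace_mul_sub_trace_mul
    (horth : ∀ i j, φ i ⬝ᵥ φ j = if i = j then 1 else 0) {H : Matrix ι ι ℝ} {lam : ι → ℝ}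
    (heig : ∀ i, H *ᵥ φ i = lam i • φ i) {s : Finset ι} {μ ν : ℝ}
    (hlow : ∀ i ∈ s, lam i ≤ μ) (hhigh : ∀ i ∉ s, ν ≤ lam i) {P : Matrix ι ι ℝ}
    (h0 : P.PosSemidef) (h1 : (1 - P).PosSemidef) (htr : P.trace = s.card) :
    (ν - μ) * (s.card - ((∑ i ∈ s, vecMulVec (φ i) (φ i)) * P).trace) ≤
      (H * P).trace - (H * ∑ i ∈ s, vecMulVec (φ i) (φ i)).trace := by
  have hq (i : ι) : φ i ⬝ᵥ (P *ᵥ φ i) ∈ Set.Icc 0 1 :=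
    dotProduct_mulVec_mem_Icc h0 h1 (by rw [horth, if_pos rfl])
  rw [trace_sum_vecMulVec_self_mul, trace_mul_eq_sum_of_mulVec_eq horth heig,
    trace_mul_sum_vecMulVec_self horth heig]
  exact gap_mul_le_sum_mul_sub_sum s hlow hhigh (fun i => (hq i).1) (fun i => (hq i).2)
    (by rw [sum_dotProduct_mulVec_eq_trace horth, htr])

end Orthonormal

theorem sum_vecMulVec_self_mem_CN {n : ℕ} {φ : Fin n → Fin n → ℝ}
    (horth : ∀ i j, φ i ⬝ᵥ φ j = if i = j then 1 else 0) (s : Finset (Fin n)) :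
    ∑ i ∈ s, vecMulVec (φ i) (φ i) ∈ CN n s.card := by
  have hpsd (t : Finset (Fin n)) : (∑ i ∈ t, vecMulVec (φ i) (φ i)).PosSemidef :=
    posSemidef_sum t fun i _ => by simpa using posSemidef_vecMulVec_self_star (φ i)
  refine ⟨?_, ?_, hpsd s, ?_⟩
  · simp [IsSymm, transpose_sum]
  · simp [trace_sum, horth]
  · rw [← sum_vecMulVec_self_eq_one horth, ← Finset.sum_add_sum_compl s, add_sub_cancel_left]
    exact hpsd sᶜ

/-- Frobenius-norm approximation of the ℓ¹-regularized
minimizer at zero temperature: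
`‖Pη − P∞‖_F² ≤ (2/η) ‖P∞‖₁ / (λ_{N+1} − λ_N)`. -/
theorem stmt2 {n N : ℕ} (hNn : N < n)
    (H : Matrix (Fin n) (Fin n) ℝ)
    (lam : Fin n → ℝ) (hmono : Monotone lam)
    (φ : Fin n → Fin n → ℝ)
    (horth : ∀ i j, φ i ⬝ᵥ φ j = if i = j then (1 : ℝ) else 0)
    (heig : ∀ i, H.mulVec (φ i) = lam i • φ i)
    (hgap : lam ⟨N - 1, by omega⟩ < lam ⟨N, hNn⟩)
    (Pinf : Matrix (Fin n) (Fin n) ℝ)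
    (hPinf : Pinf = ∑ i ∈ Finset.univ.filter (fun i : Fin n => (i : ℕ) < N),
      vecMulVec (φ i) (φ i))
    (η : ℝ) (hη : 0 < η)
    (Pη : Matrix (Fin n) (Fin n) ℝ) (hPη : Pη ∈ CN n N)
    (hmin : ∀ P ∈ CN n N,
      (H * Pη).trace + η⁻¹ * l1Norm Pη ≤ (H * P).trace + η⁻¹ * l1Norm P) :
    frobSq (Pη - Pinf) ≤
      (2 / η) * l1Norm Pinf / (lam ⟨N, hNn⟩ - lam ⟨N - 1, by omega⟩) := by
  set s := Finset.univ.filter (fun i : Fin n => (i : ℕ) < N)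
  have hs : s.card = N := by
    rw [Fin.card_filter_val_lt]; omega
  have hPinfCN : Pinf ∈ CN n N := hs ▸ hPinf ▸ sum_vecMulVec_self_mem_CN horth s
  have hlow : ∀ i ∈ s, lam i ≤ lam ⟨N - 1, by omega⟩ := fun i hi =>
    hmono (Fin.le_iff_val_le_val.mpr (by simp only [s, Finset.mem_filter] at hi; simp; omega))
  have hhigh : ∀ i ∉ s, lam ⟨N, hNn⟩ ≤ lam i := fun i hi =>
    hmono (Fin.le_iff_val_le_val.mpr (by simpa [s] using hi))
  have hspread := gap_mul_le_trace_mul_sub_trace_mul horth heig hlow hhigh hPη.2.2.1 hPη.2.2.2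
    (by rw [hPη.2.1, hs])
  have hfrob := frobSq_sub_le_of_mem_CN hPη hPinfCN.1
    (by rw [hPinf, trace_sum_vecMulVec_self_mul_self horth, hs])
  rw [hs, ← hPinf] at hspread
  have hdescent : (H * Pη).trace - (H * Pinf).trace ≤ η⁻¹ * l1Norm Pinf := by
    linarith [hmin Pinf hPinfCN, mul_nonneg (inv_nonneg.mpr hη.le) (l1Norm_nonneg Pη)]
  rw [le_div_iff₀ (sub_pos.mpr hgap)]
  calc frobSq (Pη - Pinf) * (lam ⟨N, hNn⟩ - lam ⟨N - 1, by omega⟩)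
      ≤ 2 * (N - (Pinf * Pη).trace) * (lam ⟨N, hNn⟩ - lam ⟨N - 1, by omega⟩) :=
        mul_le_mul_of_nonneg_right hfrob (sub_pos.mpr hgap).le
    _ ≤ 2 * (η⁻¹ * l1Norm Pinf) := by linarith
    _ = 2 / η * l1Norm Pinf := by ring
end

section
/- Let H be an n×n real symmetric matrix with eigenvalues λ_1 ≤ ⋯ ≤ λ_n (counted with multiplicity) and corresponding orthonormal eigenvectors φ_1, …, φ_n, let 1 ≤ N < n and β > 0, and let μ ∈ ℝ satisfy Σ_{i=1}^n (1 + exp(β(λ_i − μ)))⁻¹ = N. Set ρ_i = (1 + exp(β(λ_i − μ)))⁻¹ and P_{β,∞} = Σ_{i=1}^n ρ_i φ_iφ_iᵀ. Then P_{β,∞} ∈ C_N, and for every P ∈ C_N one has E_β(P) ≥ E_β(P_{β,∞}), with equality if and only if P = P_{β,∞}. -/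
open Matrix BigOperators Real

open scoped Classical in
/-- The Fermi–Dirac entropy `S(P) = ∑_i (σ_i ln σ_i + (1−σ_i) ln(1−σ_i))` of a
symmetric matrix, computed from its eigenvalues `σ_i` (with `0 ln 0 = 0`,
which holds automatically since `Real.log 0 = 0`). -/
noncomputable def matEntropy {n : ℕ} (P : Matrix (Fin n) (Fin n) ℝ) : ℝ :=
  if h : P.IsHermitian then
    ∑ i, (h.eigenvalues i * Real.log (h.eigenvalues i) +
      (1 - h.eigenvalues i) * Real.log (1 - h.eigenvalues i))
  else 0

/-- The free energy at inverse temperature `β`: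
`E_β(P) = tr(HP) + β⁻¹ S(P)`. -/
noncomputable def freeEnergy {n : ℕ} (β : ℝ) (H P : Matrix (Fin n) (Fin n) ℝ) : ℝ :=
  (H * P).trace + β⁻¹ * matEntropy P

/-!
Write `P = ∑ σ_j ψ_j ψ_jᵀ` in an orthonormal eigenbasis; then `σ_j ∈ [0, 1]`. The overlaps
`w_ij = (ψ_j ⬝ φ_i)²` form a doubly stochastic matrix, so `S(P) - S(P_β)` minus the linearisation
`∑_i s'(ρ_i) (φ_iᵀ P φ_i - ρ_i)` of the entropy density `s` at `P_β` equals `∑ w_ij KL(σ_j ‖ ρ_i)`,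
a sum of binary Kullback–Leibler divergences (Klein's inequality). The Fermi–Dirac occupations are
exactly those with `s'(ρ_i) = β (μ - λ_i)`, so with `tr P = N = ∑ ρ_i` the linear term cancels
`tr(HP) - tr(HP_β)`, leaving `E_β(P) - E_β(P_β) = β⁻¹ ∑ w_ij KL(σ_j ‖ ρ_i) ≥ 0`. Equality forces
`σ_j = ρ_i` whenever `w_ij ≠ 0`, i.e. `P φ_i = ρ_i φ_i` for all `i`.
-/

open Set InformationTheory

def DotOrthonormal {m : Type*} [Fintype m] [DecidableEq m] (v : m → m → ℝ) : Prop :=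
  ∀ i j, v i ⬝ᵥ v j = if i = j then 1 else 0

namespace DotOrthonormal

variable {m : Type*} [Fintype m] [DecidableEq m] {v w : m → m → ℝ} {A : Matrix m m ℝ}
  {d s : m → ℝ}

theorem sum_vecMulVec_self (hv : DotOrthonormal v) : ∑ i, vecMulVec (v i) (v i) = 1 := by
  have hU : Matrix.of v * (Matrix.of v)ᵀ = 1 := by
    ext i j
    simpa [Matrix.mul_apply, Matrix.one_apply, dotProduct] using hv i j
  have hU' : (Matrix.of v)ᵀ * Matrix.of v = 1 := mul_eq_one_comm.mp hU
  ext a b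
  simpa [Matrix.mul_apply, vecMulVec_apply, Matrix.sum_apply] using congrFun (congrFun hU' a) b

theorem sum_dotProduct_smul (hv : DotOrthonormal v) (x : m → ℝ) :
    ∑ i, (v i ⬝ᵥ x) • v i = x := by
  simpa [sum_mulVec, vecMulVec_mulVec] using congr_arg (· *ᵥ x) hv.sum_vecMulVec_self

theorem sum_sq_dotProduct (hv : DotOrthonormal v) (x : m → ℝ) :
    ∑ i, (v i ⬝ᵥ x) ^ 2 = x ⬝ᵥ x := by
  calc ∑ i, (v i ⬝ᵥ x) ^ 2 = (∑ i, (v i ⬝ᵥ x) • v i) ⬝ᵥ x := by simp [sum_dotProduct, sq]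
    _ = x ⬝ᵥ x := by rw [hv.sum_dotProduct_smul]

theorem matrix_ext (hv : DotOrthonormal v) {B : Matrix m m ℝ}
    (h : ∀ i, A *ᵥ v i = B *ᵥ v i) : A = B := by
  rw [← A.mul_one, ← B.mul_one, ← hv.sum_vecMulVec_self]
  simp only [Finset.mul_sum, mul_vecMulVec, h]

theorem sum_smul_vecMulVec_mulVec (hv : DotOrthonormal v) (c : m → ℝ) (k : m) :
    (∑ i, c i • vecMulVec (v i) (v i)) *ᵥ v k = c k • v k := by
  simp [sum_mulVec, smul_mulVec, vecMulVec_mulVec, hv _ k]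

theorem eq_sum_smul_vecMulVec (hv : DotOrthonormal v) (hA : ∀ i, A *ᵥ v i = d i • v i) :
    A = ∑ i, d i • vecMulVec (v i) (v i) :=
  hv.matrix_ext fun k => by rw [hA, hv.sum_smul_vecMulVec_mulVec]

theorem trace_mul_eq_sum (hv : DotOrthonormal v) (hA : ∀ i, A *ᵥ v i = d i • v i)
    (M : Matrix m m ℝ) : (A * M).trace = ∑ i, d i * (v i ⬝ᵥ (M *ᵥ v i)) := by
  rw [trace_mul_comm, hv.eq_sum_smul_vecMulVec hA]
  simp [Finset.mul_sum, mul_vecMulVec, dotProduct_comm]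

theorem dotProduct_mulVec_eq_sum (hv : DotOrthonormal v) (hA : ∀ i, A *ᵥ v i = d i • v i)
    (x : m → ℝ) : x ⬝ᵥ (A *ᵥ x) = ∑ i, d i * (v i ⬝ᵥ x) ^ 2 := by
  rw [hv.eq_sum_smul_vecMulVec hA]
  simp only [sum_mulVec, smul_mulVec, vecMulVec_mulVec, op_smul_eq_smul, dotProduct_sum,
    dotProduct_smul, smul_eq_mul]
  exact Finset.sum_congr rfl fun i _ => by rw [dotProduct_comm x]; ring

theorem sum_sq_dotProduct_eq_one (hv : DotOrthonormal v) (hw : DotOrthonormal w) (i : m) :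
    ∑ j, (w j ⬝ᵥ v i) ^ 2 = 1 := by
  rw [hw.sum_sq_dotProduct, hv i i, if_pos rfl]

theorem sum_sum_sq_dotProduct_mul_sub (hv : DotOrthonormal v) (hw : DotOrthonormal w)
    (a b : m → ℝ) : ∑ i, ∑ j, (w j ⬝ᵥ v i) ^ 2 * (a j - b i) = ∑ j, a j - ∑ i, b i := by
  simp only [mul_sub, Finset.sum_sub_distrib, ← Finset.sum_mul, hv.sum_sq_dotProduct_eq_one hw,
    one_mul]
  rw [Finset.sum_comm]
  simp only [← Finset.sum_mul, dotProduct_comm (w _), hw.sum_sq_dotProduct_eq_one hv, one_mul]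

theorem mulVec_eq_smul_of_forall_dotProduct_ne_zero (hw : DotOrthonormal w)
    (hAw : ∀ j, A *ᵥ w j = s j • w j) {x : m → ℝ} {r : ℝ}
    (h : ∀ j, w j ⬝ᵥ x ≠ 0 → s j = r) : A *ᵥ x = r • x := by
  conv_lhs => rw [← hw.sum_dotProduct_smul x]
  conv_rhs => rw [← hw.sum_dotProduct_smul x]
  simp only [mulVec_sum, mulVec_smul, hAw, Finset.smul_sum, smul_smul]
  refine Finset.sum_congr rfl fun j _ => ?_
  by_cases hj : w j ⬝ᵥ x = 0
  · simp [hj]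
  · rw [h j hj, mul_comm]

end DotOrthonormal

theorem Matrix.IsSymm.dotProduct_eq_zero_of_mulVec_eq_smul {m : Type*} [Fintype m]
    {A : Matrix m m ℝ} (hA : A.IsSymm) {u w : m → ℝ} {a b : ℝ} (hu : A *ᵥ u = a • u)
    (hw : A *ᵥ w = b • w) (hab : a ≠ b) : u ⬝ᵥ w = 0 := by
  have h : a * (u ⬝ᵥ w) = b * (u ⬝ᵥ w) := by
    rw [← smul_eq_mul, ← smul_dotProduct, ← hu, ← smul_eq_mul, ← dotProduct_smul, ← hw,
      dotProduct_mulVec, ← mulVec_transpose, hA.eq]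
  exact (mul_eq_mul_right_iff.mp h).resolve_left hab

theorem Matrix.IsHermitian.dotOrthonormal_eigenvectorBasis {m : Type*} [Fintype m]
    [DecidableEq m] {A : Matrix m m ℝ} (hA : A.IsHermitian) :
    DotOrthonormal fun j => ⇑(hA.eigenvectorBasis j) := by
  intro i j
  simpa [EuclideanSpace.inner_eq_star_dotProduct, dotProduct_comm] using
    orthonormal_iff_ite.mp hA.eigenvectorBasis.orthonormal i j

theorem DotOrthonormal.sum_comp_eigenvalues_eq {m : Type*} [Fintype m] [DecidableEq m]
    {v w : m → m → ℝ} {A : Matrix m m ℝ} {d s : m → ℝ} (hv : DotOrthonormal v)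
    (hw : DotOrthonormal w) (hA : A.IsSymm) (hAv : ∀ i, A *ᵥ v i = d i • v i)
    (hAw : ∀ j, A *ᵥ w j = s j • w j) (g : ℝ → ℝ) : ∑ j, g (s j) = ∑ i, g (d i) := by
  have hterm : ∀ i j, (w j ⬝ᵥ v i) ^ 2 * (g (s j) - g (d i)) = 0 := by
    intro i j
    by_cases h : s j = d i
    · simp [h]
    · simp [hA.dotProduct_eq_zero_of_mulVec_eq_smul (hAw j) (hAv i) h]
  have := hv.sum_sum_sq_dotProduct_mul_sub hw (g ∘ s) (g ∘ d)
  simp only [hterm, Finset.sum_const_zero, Function.comp_apply] at this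
  linarith

noncomputable def entropyDensity (x : ℝ) : ℝ := x * log x + (1 - x) * log (1 - x)

theorem matEntropy_eq_sum {n : ℕ} {P : Matrix (Fin n) (Fin n) ℝ} (hP : P.IsSymm)
    {v : Fin n → Fin n → ℝ} (hv : DotOrthonormal v) {s : Fin n → ℝ}
    (hPv : ∀ i, P *ᵥ v i = s i • v i) : matEntropy P = ∑ i, entropyDensity (s i) := by
  have hPh : P.IsHermitian := isHermitian_iff_isSymm.mpr hP
  rw [matEntropy, dif_pos hPh]
  exact hv.sum_comp_eigenvalues_eq hPh.dotOrthonormal_eigenvectorBasis hP hPv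
    hPh.mulVec_eigenvectorBasis entropyDensity

theorem mul_klFun_div (x : ℝ) {r : ℝ} (hr : r ≠ 0) :
    r * klFun (x / r) = x * log x - x * log r + r - x := by
  rcases eq_or_ne x 0 with rfl | hx
  · simp [klFun]
  · rw [klFun, log_div hx hr]
    field_simp

noncomputable def bernoulliKL (x r : ℝ) : ℝ :=
  r * klFun (x / r) + (1 - r) * klFun ((1 - x) / (1 - r))

section bernoulliKL

variable {x r : ℝ}

theorem bernoulliKL_eq_entropyDensity_sub (x : ℝ) (hr : r ∈ Ioo 0 1) :
    bernoulliKL x r =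
      entropyDensity x - entropyDensity r - (log r - log (1 - r)) * (x - r) := by
  rw [bernoulliKL, mul_klFun_div x hr.1.ne', mul_klFun_div (1 - x) (sub_pos.mpr hr.2).ne',
    entropyDensity, entropyDensity]
  ring

theorem bernoulliKL_nonneg (hx : x ∈ Icc 0 1) (hr : r ∈ Ioo 0 1) : 0 ≤ bernoulliKL x r :=
  add_nonneg (mul_nonneg hr.1.le (klFun_nonneg (div_nonneg hx.1 hr.1.le)))
    (mul_nonneg (sub_pos.mpr hr.2).le
      (klFun_nonneg (div_nonneg (sub_nonneg.mpr hx.2) (sub_pos.mpr hr.2).le)))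

theorem bernoulliKL_eq_zero_iff (hx : x ∈ Icc 0 1) (hr : r ∈ Ioo 0 1) :
    bernoulliKL x r = 0 ↔ x = r := by
  refine ⟨fun h => ?_, fun h => by
    simp [h, bernoulliKL, hr.1.ne', (sub_pos.mpr hr.2).ne', klFun_one]⟩
  have hx0 : 0 ≤ x / r := div_nonneg hx.1 hr.1.le
  have hfirst : r * klFun (x / r) = 0 := by
    have hfirst_nonneg := mul_nonneg hr.1.le (klFun_nonneg hx0)
    have hsecond_nonneg := mul_nonneg (sub_pos.mpr hr.2).le
      (klFun_nonneg (div_nonneg (sub_nonneg.mpr hx.2) (sub_pos.mpr hr.2).le))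
    rw [bernoulliKL] at h
    linarith
  have hdiv : x / r = 1 :=
    (klFun_eq_zero_iff hx0).mp ((mul_eq_zero.mp hfirst).resolve_left hr.1.ne')
  exact (div_eq_one_iff_eq hr.1.ne').mp hdiv

end bernoulliKL

/-- The relative entropy of `∑ σ_j ψ_j ψ_jᵀ` with respect to `∑ ρ_i φ_i φ_iᵀ`, written in the two
eigenbases: the overlaps `(ψ_j ⬝ φ_i)²` form a doubly stochastic matrix. -/
noncomputable def relEntropy {m : Type*} [Fintype m] (ψ φ : m → m → ℝ) (σ ρ : m → ℝ) : ℝ :=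
  ∑ i, ∑ j, (ψ j ⬝ᵥ φ i) ^ 2 * bernoulliKL (σ j) (ρ i)

theorem relEntropy_nonneg {m : Type*} [Fintype m] {ψ φ : m → m → ℝ} {σ ρ : m → ℝ}
    (hσ : ∀ j, σ j ∈ Icc 0 1) (hρ : ∀ i, ρ i ∈ Ioo 0 1) : 0 ≤ relEntropy ψ φ σ ρ :=
  Finset.sum_nonneg fun i _ => Finset.sum_nonneg fun j _ =>
    mul_nonneg (sq_nonneg _) (bernoulliKL_nonneg (hσ j) (hρ i))

section Klein

variable {m : Type*} [Fintype m] [DecidableEq m] {ψ φ : m → m → ℝ} {P : Matrix m m ℝ}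
  {σ ρ : m → ℝ}

theorem relEntropy_eq (hψ : DotOrthonormal ψ) (hφ : DotOrthonormal φ)
    (hPψ : ∀ j, P *ᵥ ψ j = σ j • ψ j) (hρ : ∀ i, ρ i ∈ Ioo 0 1) :
    relEntropy ψ φ σ ρ =
      ∑ j, entropyDensity (σ j) - ∑ i, entropyDensity (ρ i) -
        ∑ i, (log (ρ i) - log (1 - ρ i)) * (φ i ⬝ᵥ (P *ᵥ φ i) - ρ i) := by
  rw [relEntropy, ← hφ.sum_sum_sq_dotProduct_mul_sub hψ, ← Finset.sum_sub_distrib]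
  refine Finset.sum_congr rfl fun i _ => ?_
  set c := log (ρ i) - log (1 - ρ i)
  calc ∑ j, (ψ j ⬝ᵥ φ i) ^ 2 * bernoulliKL (σ j) (ρ i)
      = ∑ j, ((ψ j ⬝ᵥ φ i) ^ 2 * (entropyDensity (σ j) - entropyDensity (ρ i)) -
          c * (σ j * (ψ j ⬝ᵥ φ i) ^ 2 - ρ i * (ψ j ⬝ᵥ φ i) ^ 2)) :=
        Finset.sum_congr rfl fun j _ => by
          rw [bernoulliKL_eq_entropyDensity_sub _ (hρ i)]
          ring
    _ = ∑ j, (ψ j ⬝ᵥ φ i) ^ 2 * (entropyDensity (σ j) - entropyDensity (ρ i)) -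
          c * (∑ j, σ j * (ψ j ⬝ᵥ φ i) ^ 2 - ρ i * ∑ j, (ψ j ⬝ᵥ φ i) ^ 2) := by
        rw [Finset.sum_sub_distrib, ← Finset.mul_sum, Finset.sum_sub_distrib, ← Finset.mul_sum]
    _ = _ := by
        rw [← hψ.dotProduct_mulVec_eq_sum hPψ, hφ.sum_sq_dotProduct_eq_one hψ, mul_one]

theorem mulVec_eq_smul_of_relEntropy_eq_zero (hψ : DotOrthonormal ψ)
    (hPψ : ∀ j, P *ᵥ ψ j = σ j • ψ j) (hσ : ∀ j, σ j ∈ Icc 0 1) (hρ : ∀ i, ρ i ∈ Ioo 0 1)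
    (h : relEntropy ψ φ σ ρ = 0) (i : m) : P *ᵥ φ i = ρ i • φ i := by
  have hterm_nonneg : ∀ i j, 0 ≤ (ψ j ⬝ᵥ φ i) ^ 2 * bernoulliKL (σ j) (ρ i) :=
    fun i j => mul_nonneg (sq_nonneg _) (bernoulliKL_nonneg (hσ j) (hρ i))
  have hrow := (Finset.sum_eq_zero_iff_of_nonneg fun i _ =>
    Finset.sum_nonneg fun j _ => hterm_nonneg i j).mp h i (Finset.mem_univ i)
  refine hψ.mulVec_eq_smul_of_forall_dotProduct_ne_zero hPψ fun j hj => ?_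
  have hterm := (Finset.sum_eq_zero_iff_of_nonneg fun j _ => hterm_nonneg i j).mp hrow j
    (Finset.mem_univ j)
  exact (bernoulliKL_eq_zero_iff (hσ j) (hρ i)).mp
    ((mul_eq_zero.mp hterm).resolve_left (pow_ne_zero 2 hj))

end Klein

theorem inv_one_add_exp_mem_Ioo (t : ℝ) : (1 + exp t)⁻¹ ∈ Ioo 0 1 :=
  ⟨by positivity, inv_lt_one_of_one_lt₀ (lt_add_of_pos_right 1 (exp_pos t))⟩

theorem log_inv_one_add_exp_sub_log_one_sub (t : ℝ) :
    log (1 + exp t)⁻¹ - log (1 - (1 + exp t)⁻¹) = -t := by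
  have h : 1 - (1 + exp t)⁻¹ = exp t * (1 + exp t)⁻¹ := by
    field_simp
    ring
  rw [h, log_mul (exp_pos t).ne' (by positivity), log_exp]
  ring

theorem posSemidef_sum_smul_vecMulVec_self {m : Type*} [Fintype m] {v : m → m → ℝ}
    {c : m → ℝ} (hc : ∀ i, 0 ≤ c i) : (∑ i, c i • vecMulVec (v i) (v i)).PosSemidef :=
  posSemidef_sum _ fun i _ => (show (vecMulVec (v i) (v i)).PosSemidef by
    simpa using posSemidef_vecMulVec_self_star (v i)).smul (hc i)

theorem sum_smul_vecMulVec_mem_CN {n N : ℕ} {v : Fin n → Fin n → ℝ} (hv : DotOrthonormal v)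
    {c : Fin n → ℝ} (hc : ∀ i, c i ∈ Icc 0 1) (htr : ∑ i, c i = N) :
    ∑ i, c i • vecMulVec (v i) (v i) ∈ CN n N := by
  have hpsd := posSemidef_sum_smul_vecMulVec_self (v := v) fun i => (hc i).1
  have hone : 1 - ∑ i, c i • vecMulVec (v i) (v i) = ∑ i, (1 - c i) • vecMulVec (v i) (v i) := by
    simp only [sub_smul, one_smul, Finset.sum_sub_distrib, hv.sum_vecMulVec_self]
  refine ⟨isHermitian_iff_isSymm.mp hpsd.1, ?_, hpsd, ?_⟩
  · simp [trace_sum, hv _ _, htr]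
  · rw [hone]
    exact posSemidef_sum_smul_vecMulVec_self fun i => sub_nonneg.mpr (hc i).2

theorem exists_eigen_of_mem_CN {n N : ℕ} {P : Matrix (Fin n) (Fin n) ℝ} (hP : P ∈ CN n N) :
    ∃ ψ : Fin n → Fin n → ℝ, ∃ σ : Fin n → ℝ, DotOrthonormal ψ ∧
      (∀ j, P *ᵥ ψ j = σ j • ψ j) ∧ ∀ j, σ j ∈ Icc 0 1 := by
  obtain ⟨-, -, hpsd, hpsd'⟩ := hP
  have hψ := hpsd.1.dotOrthonormal_eigenvectorBasis
  refine ⟨_, _, hψ, hpsd.1.mulVec_eigenvectorBasis, fun j => ⟨hpsd.eigenvalues_nonneg j, ?_⟩⟩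
  have h := hpsd'.dotProduct_mulVec_nonneg (hpsd.1.eigenvectorBasis j)
  simp only [star_trivial, sub_mulVec, one_mulVec, hpsd.1.mulVec_eigenvectorBasis j,
    dotProduct_sub, dotProduct_smul, smul_eq_mul, hψ j j, ↓reduceIte] at h
  linarith

theorem freeEnergy_sub_freeEnergy_eq {n : ℕ} {H P Q : Matrix (Fin n) (Fin n) ℝ}
    {φ ψ : Fin n → Fin n → ℝ} {lam σ ρ : Fin n → ℝ} {β μ : ℝ} (hφ : DotOrthonormal φ)
    (hHφ : ∀ i, H *ᵥ φ i = lam i • φ i) (hβ : β ≠ 0)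
    (hρ : ∀ i, ρ i = (1 + exp (β * (lam i - μ)))⁻¹) (hQ : Q.IsSymm)
    (hQφ : ∀ i, Q *ᵥ φ i = ρ i • φ i) (hP : P.IsSymm) (htr : P.trace = Q.trace)
    (hψ : DotOrthonormal ψ) (hPψ : ∀ j, P *ᵥ ψ j = σ j • ψ j) :
    freeEnergy β H P - freeEnergy β H Q = β⁻¹ * relEntropy ψ φ σ ρ := by
  have hρI : ∀ i, ρ i ∈ Ioo 0 1 := fun i => hρ i ▸ inv_one_add_exp_mem_Ioo _
  have hlogit : ∀ i, log (ρ i) - log (1 - ρ i) = β * (μ - lam i) := fun i => by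
    rw [hρ i, log_inv_one_add_exp_sub_log_one_sub]
    ring
  have hQq : ∀ i, φ i ⬝ᵥ (Q *ᵥ φ i) = ρ i := by simp [hQφ, hφ _ _]
  have htrace : ∀ M, M.trace = ∑ i, φ i ⬝ᵥ (M *ᵥ φ i) := fun M => by
    simpa using hφ.trace_mul_eq_sum (A := 1) (d := 1) (by simp) M
  have hsum : ∑ i, φ i ⬝ᵥ (P *ᵥ φ i) = ∑ i, ρ i := by
    rw [← htrace, htr, htrace]
    simp only [hQq]
  rw [relEntropy_eq hψ hφ hPψ hρI, freeEnergy, freeEnergy,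
    hφ.trace_mul_eq_sum hHφ, hφ.trace_mul_eq_sum hHφ, matEntropy_eq_sum hP hψ hPψ,
    matEntropy_eq_sum hQ hφ hQφ]
  simp only [hlogit, hQq]
  have hlin : ∑ i, β * (μ - lam i) * (φ i ⬝ᵥ (P *ᵥ φ i) - ρ i) =
      β * (μ * (∑ i, φ i ⬝ᵥ (P *ᵥ φ i) - ∑ i, ρ i) -
        (∑ i, lam i * (φ i ⬝ᵥ (P *ᵥ φ i)) - ∑ i, lam i * ρ i)) := by
    simp only [mul_sub, Finset.mul_sum, ← Finset.sum_sub_distrib]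
    exact Finset.sum_congr rfl fun i _ => by ring
  rw [hlin, hsum]
  field_simp
  ring

theorem stmt6_general {n N : ℕ}
    (H : Matrix (Fin n) (Fin n) ℝ)
    (lam : Fin n → ℝ)
    (φ : Fin n → Fin n → ℝ)
    (horth : ∀ i j, φ i ⬝ᵥ φ j = if i = j then (1 : ℝ) else 0)
    (heig : ∀ i, H.mulVec (φ i) = lam i • φ i)
    (β : ℝ) (hβ : 0 < β) (μ : ℝ)
    (hμ : ∑ i, (1 + Real.exp (β * (lam i - μ)))⁻¹ = (N : ℝ))
    (ρ : Fin n → ℝ) (hρ : ∀ i, ρ i = (1 + Real.exp (β * (lam i - μ)))⁻¹)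
    (Pβ : Matrix (Fin n) (Fin n) ℝ)
    (hPβ : Pβ = ∑ i, ρ i • vecMulVec (φ i) (φ i)) :
    Pβ ∈ CN n N ∧
      ∀ P ∈ CN n N, freeEnergy β H Pβ ≤ freeEnergy β H P ∧
        (freeEnergy β H P = freeEnergy β H Pβ ↔ P = Pβ) := by
  have hφ : DotOrthonormal φ := horth
  have hρI : ∀ i, ρ i ∈ Ioo 0 1 := fun i => hρ i ▸ inv_one_add_exp_mem_Ioo _
  have hPβφ : ∀ i, Pβ *ᵥ φ i = ρ i • φ i := hPβ ▸ hφ.sum_smul_vecMulVec_mulVec ρ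
  have hPβmem : Pβ ∈ CN n N := hPβ ▸ sum_smul_vecMulVec_mem_CN hφ
    (fun i => Ioo_subset_Icc_self (hρI i)) (by simpa only [hρ] using hμ)
  refine ⟨hPβmem, fun P hP => ?_⟩
  obtain ⟨ψ, σ, hψ, hPψ, hσ⟩ := exists_eigen_of_mem_CN hP
  have hgap := freeEnergy_sub_freeEnergy_eq hφ heig hβ.ne' hρ hPβmem.1 hPβφ hP.1
    (hP.2.1.trans hPβmem.2.1.symm) hψ hPψ
  have hKL := mul_nonneg (inv_nonneg.mpr hβ.le) (relEntropy_nonneg (ψ := ψ) (φ := φ) hσ hρI)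
  refine ⟨by linarith, fun heq => ?_, fun h => h ▸ rfl⟩
  rw [heq, sub_self, eq_comm, mul_eq_zero, or_iff_right (inv_ne_zero hβ.ne')] at hgap
  exact hφ.matrix_ext fun i => by
    rw [hPβφ, mulVec_eq_smul_of_relEntropy_eq_zero hψ hPψ hσ hρI hgap]

/-- The Fermi–Dirac density matrix
`P_{β,∞} = ∑_i (1 + e^{β(λ_i−μ)})⁻¹ φ_i φ_iᵀ` belongs to `C_N` and is the
unique minimizer of the free energy `E_β` over `C_N`. -/
theorem stmt6 {n N : ℕ} (hN1 : 1 ≤ N) (hNn : N < n)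
    (H : Matrix (Fin n) (Fin n) ℝ) (hH : H.IsSymm)
    (lam : Fin n → ℝ) (hmono : Monotone lam)
    (φ : Fin n → Fin n → ℝ)
    (horth : ∀ i j, φ i ⬝ᵥ φ j = if i = j then (1 : ℝ) else 0)
    (heig : ∀ i, H.mulVec (φ i) = lam i • φ i)
    (β : ℝ) (hβ : 0 < β) (μ : ℝ)
    (hμ : ∑ i, (1 + Real.exp (β * (lam i - μ)))⁻¹ = (N : ℝ))
    (ρ : Fin n → ℝ) (hρ : ∀ i, ρ i = (1 + Real.exp (β * (lam i - μ)))⁻¹)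
    (Pβ : Matrix (Fin n) (Fin n) ℝ)
    (hPβ : Pβ = ∑ i, ρ i • vecMulVec (φ i) (φ i)) :
    Pβ ∈ CN n N ∧
      ∀ P ∈ CN n N, freeEnergy β H Pβ ≤ freeEnergy β H P ∧
        (freeEnergy β H P = freeEnergy β H Pβ ↔ P = Pβ) :=
  stmt6_general H lam φ horth heig β hβ μ hμ ρ hρ Pβ hPβ
end

section
/- Let H be an n×n real symmetric matrix with eigenvalues λ_1 ≤ ⋯ ≤ λ_n (counted with multiplicity) and corresponding orthonormal eigenvectors φ_1, …, φ_n, let 1 ≤ N < n, β > 0, and let μ ∈ ℝ satisfy Σ_{i=1}^n (1 + exp(β(λ_i − μ)))⁻¹ = N. Set ρ_i = (1 + exp(β(λ_i − μ)))⁻¹ and P_{β,∞} = Σ_{i=1}^n ρ_i φ_iφ_iᵀ. If η > 0 and P_{β,η} ∈ C_N minimizes P ↦ E_β(P) + η⁻¹‖P‖₁ over C_N, then 0 ≤ E_β(P_{β,η}) − E_β(P_{β,∞}) ≤ η⁻¹‖P_{β,∞}‖₁. -/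
/-
With `Φ` the orthogonal matrix whose columns are the `φ_i`, the Fermi–Dirac matrix
`P_{β,∞} = Φ diag(ρ) Φᵀ` minimises `E_β` over `C_N` (Gibbs' variational principle). For `P ∈ C_N`
put `p_i = (Φᵀ P Φ)_{ii} ∈ [0,1]`, so `∑ p_i = N` and `tr(HP) = ∑ λ_i p_i`. The squared overlaps
between an eigenbasis of `P` and the basis `Φ` form a doubly stochastic matrix carrying the
eigenvalues of `P` to `p`, so concavity of the binary entropy `h` gives `S(P) ≥ -∑ h(p_i)`.
Since `ρ_i` minimises `(λ_i - μ) p - β⁻¹ h(p)` over `p ∈ [0,1]` and `∑ p_i = N = ∑ ρ_i`,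
`E_β(P) ≥ ∑ (λ_i ρ_i - β⁻¹ h(ρ_i)) ≥ E_β(P_{β,∞})`. This is the lower bound; the upper bound is
the minimality of `P_{β,η}` tested against `P_{β,∞} ∈ C_N`.
-/

open Matrix BigOperators Real

lemma sub_le_mul_log_sub_log {x y : ℝ} (hx : 0 ≤ x) (hy : 0 < y) :
    x - y ≤ x * (log x - log y) := by
  rcases hx.eq_or_lt with rfl | hx
  · simpa using hy.le
  have h := log_le_sub_one_of_pos (div_pos hy hx)
  rw [log_div hy.ne' hx.ne'] at h
  have := mul_le_mul_of_nonneg_left h hx.le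
  rw [mul_sub, mul_sub, mul_one, mul_div_cancel₀ _ hx.ne'] at this
  linarith

/-- The gap is the binary relative entropy of `p` from `q` (Gibbs' inequality). -/
lemma binEntropy_le_add_mul_sub {p q : ℝ} (hp₀ : 0 ≤ p) (hp₁ : p ≤ 1) (hq₀ : 0 < q)
    (hq₁ : q < 1) :
    binEntropy p ≤ binEntropy q + (log (1 - q) - log q) * (p - q) := by
  have h₁ := sub_le_mul_log_sub_log hp₀ hq₀
  have h₂ := sub_le_mul_log_sub_log (sub_nonneg.mpr hp₁) (sub_pos.mpr hq₁)
  simp only [binEntropy, log_inv]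
  nlinarith

lemma log_one_sub_sigmoid_sub_log_sigmoid (x : ℝ) :
    log (1 - sigmoid x) - log (sigmoid x) = -x := by
  rw [← sigmoid_neg, ← sigmoid_mul_rexp_neg, log_mul (sigmoid_pos x).ne' (exp_pos _).ne',
    log_exp]
  ring

lemma binEntropy_add_mul_le_binEntropy_sigmoid_add_mul (x : ℝ) {p : ℝ} (hp : p ∈ Set.Icc 0 1) :
    binEntropy p + x * p ≤ binEntropy (sigmoid x) + x * sigmoid x := by
  have := binEntropy_le_add_mul_sub hp.1 hp.2 (sigmoid_pos x) (sigmoid_lt_one x)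
  rw [log_one_sub_sigmoid_sub_log_sigmoid] at this
  linarith

lemma inv_one_add_exp_mem_Icc (x : ℝ) : (1 + exp x)⁻¹ ∈ Set.Icc 0 1 :=
  ⟨by positivity, inv_le_one_of_one_le₀ (by linarith [exp_pos x])⟩

lemma sum_mul_sub_binEntropy_le_of_fermiDirac {ι : Type*} [Fintype ι] {β μ : ℝ} (hβ : 0 < β)
    {lam ρ p : ι → ℝ} (hρ : ∀ i, ρ i = (1 + exp (β * (lam i - μ)))⁻¹)
    (hp : ∀ i, p i ∈ Set.Icc 0 1) (hsum : ∑ i, p i = ∑ i, ρ i) :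
    ∑ i, (lam i * ρ i - β⁻¹ * binEntropy (ρ i)) ≤
      ∑ i, (lam i * p i - β⁻¹ * binEntropy (p i)) := by
  have hρ' : ∀ i, ρ i = sigmoid (β * (μ - lam i)) := fun i ↦ by
    rw [hρ, sigmoid_def]; ring_nf
  have hterm : ∀ i, lam i * ρ i - β⁻¹ * binEntropy (ρ i) - μ * ρ i ≤
      lam i * p i - β⁻¹ * binEntropy (p i) - μ * p i := fun i ↦ by
    have := mul_le_mul_of_nonneg_left
      (binEntropy_add_mul_le_binEntropy_sigmoid_add_mul (β * (μ - lam i)) (hp i))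
      (inv_nonneg.mpr hβ.le)
    rw [← hρ' i] at this
    field_simp at this ⊢
    linarith
  have := Finset.sum_le_sum fun i (_ : i ∈ Finset.univ) ↦ hterm i
  simp only [Finset.sum_sub_distrib, ← Finset.mul_sum, hsum] at this ⊢
  linarith

section Orthogonal

variable {ι : Type*} [Fintype ι] [DecidableEq ι]

lemma ConcaveOn.sum_le_sum_comp_mulVec {f : ℝ → ℝ} {s : Set ℝ} (hf : ConcaveOn ℝ s f)
    {M : Matrix ι ι ℝ} (hM : M ∈ doublyStochastic ℝ ι)
    {x : ι → ℝ} (hx : ∀ i, x i ∈ s) :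
    ∑ i, f (x i) ≤ ∑ i, f ((M *ᵥ x) i) := by
  calc ∑ j, f (x j) = ∑ i, ∑ j, M i j * f (x j) := by
        rw [Finset.sum_comm]
        simp_rw [← Finset.sum_mul, sum_col_of_mem_doublyStochastic hM, one_mul]
    _ ≤ ∑ i, f ((M *ᵥ x) i) := Finset.sum_le_sum fun i _ ↦
        hf.le_map_sum (fun j _ ↦ nonneg_of_mem_doublyStochastic hM)
          (sum_row_of_mem_doublyStochastic hM i) (fun j _ ↦ hx j)

lemma hadamard_self_mem_doublyStochastic {O : Matrix ι ι ℝ} (hO : Oᵀ * O = 1) :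
    O ⊙ O ∈ doublyStochastic ℝ ι := by
  have hO' : O * Oᵀ = 1 := mul_eq_one_comm.mp hO
  refine mem_doublyStochastic_iff_sum.mpr ⟨fun i j ↦ mul_self_nonneg _, fun i ↦ ?_, fun j ↦ ?_⟩
  · simpa [mul_apply] using congr_fun (congr_fun hO' i) i
  · simpa [mul_apply] using congr_fun (congr_fun hO j) j

lemma diag_mul_diagonal_mul_transpose (O : Matrix ι ι ℝ) (d : ι → ℝ) (i : ι) :
    (O * diagonal d * Oᵀ) i i = ((O ⊙ O) *ᵥ d) i := by
  rw [mul_apply]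
  simp only [mul_diagonal, mulVec, dotProduct, hadamard_apply, transpose_apply]
  exact Finset.sum_congr rfl fun j _ ↦ by ring

lemma Matrix.IsHermitian.exists_orthogonal_diagonalization {P : Matrix ι ι ℝ}
    (hP : P.IsHermitian) :
    ∃ U : Matrix ι ι ℝ, Uᵀ * U = 1 ∧ P = U * diagonal hP.eigenvalues * Uᵀ := by
  refine ⟨hP.eigenvectorUnitary, ?_, ?_⟩
  · simpa [star_eq_conjTranspose, conjTranspose_eq_transpose_of_trivial] using
      Unitary.coe_star_mul_self hP.eigenvectorUnitary
  · conv_lhs => rw [hP.spectral_theorem, Unitary.conjStarAlgAut_apply]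
    simp [star_eq_conjTranspose, conjTranspose_eq_transpose_of_trivial]

lemma sum_binEntropy_le_sum_binEntropy_diag {V W : Matrix ι ι ℝ} (hV : Vᵀ * V = 1)
    (hW : Wᵀ * W = 1) {d : ι → ℝ} (hd : ∀ i, d i ∈ Set.Icc 0 1) :
    ∑ i, binEntropy (d i) ≤ ∑ i, binEntropy ((Wᵀ * (V * diagonal d * Vᵀ) * W) i i) := by
  have hO : (Wᵀ * V)ᵀ * (Wᵀ * V) = 1 := by
    rw [transpose_mul, transpose_transpose, Matrix.mul_assoc, ← Matrix.mul_assoc W,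
      mul_eq_one_comm.mp hW, Matrix.one_mul, hV]
  have hconj : Wᵀ * (V * diagonal d * Vᵀ) * W = (Wᵀ * V) * diagonal d * (Wᵀ * V)ᵀ := by
    simp only [transpose_mul, transpose_transpose, Matrix.mul_assoc]
  simp_rw [hconj, diag_mul_diagonal_mul_transpose]
  exact strictConcave_binEntropy.concaveOn.sum_le_sum_comp_mulVec
    (hadamard_self_mem_doublyStochastic hO) hd

lemma transpose_mul_conj_mul_eq_self {U : Matrix ι ι ℝ} (hU : Uᵀ * U = 1)
    (A : Matrix ι ι ℝ) : Uᵀ * (U * A * Uᵀ) * U = A := by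
  simp only [← Matrix.mul_assoc, hU, Matrix.one_mul]
  rw [Matrix.mul_assoc, hU, Matrix.mul_one]

lemma diag_transpose_mul_mul_mem_Icc {P W : Matrix ι ι ℝ} (hP : P.PosSemidef)
    (hP' : (1 - P).PosSemidef) (hW : Wᵀ * W = 1) (i : ι) :
    (Wᵀ * P * W) i i ∈ Set.Icc 0 1 := by
  have conj {M : Matrix ι ι ℝ} (hM : M.PosSemidef) : (Wᵀ * M * W).PosSemidef := by
    simpa [conjTranspose_eq_transpose_of_trivial] using hM.conjTranspose_mul_mul_same W
  have h₁ := (conj hP').diag_nonneg (i := i)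
  rw [Matrix.mul_sub, Matrix.sub_mul, Matrix.mul_one, hW, Matrix.sub_apply, one_apply_eq] at h₁
  exact ⟨(conj hP).diag_nonneg, sub_nonneg.mp h₁⟩

lemma trace_mul_eq_sum_mul_diag {H Φ : Matrix ι ι ℝ} {lam : ι → ℝ}
    (hΦ : Φᵀ * Φ = 1) (hHΦ : H * Φ = Φ * diagonal lam) (P : Matrix ι ι ℝ) :
    (H * P).trace = ∑ i, lam i * (Φᵀ * P * Φ) i i := by
  calc (H * P).trace = (P * H * Φ * Φᵀ).trace := by
        rw [Matrix.mul_assoc, mul_eq_one_comm.mp hΦ, Matrix.mul_one, trace_mul_comm]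
    _ = (Φᵀ * P * Φ * diagonal lam).trace := by
        rw [Matrix.mul_assoc P, hHΦ, trace_mul_comm, ← Matrix.mul_assoc, ← Matrix.mul_assoc]
    _ = ∑ i, lam i * (Φᵀ * P * Φ) i i := by
        simp only [trace, diag_apply, mul_diagonal, mul_comm]

lemma of_mul_transpose_eq_one_of_orthonormal {φ : ι → ι → ℝ}
    (h : ∀ i j, φ i ⬝ᵥ φ j = if i = j then (1 : ℝ) else 0) : of φ * (of φ)ᵀ = 1 := by
  ext i j
  simpa [mul_apply, one_apply, dotProduct] using h i j

lemma mul_transpose_of_eq_transpose_of_mul_diagonal {φ : ι → ι → ℝ} {H : Matrix ι ι ℝ}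
    {lam : ι → ℝ} (h : ∀ i, H *ᵥ φ i = lam i • φ i) : H * (of φ)ᵀ = (of φ)ᵀ * diagonal lam := by
  ext i j
  rw [mul_diagonal]
  simpa [mul_apply, mulVec, dotProduct, mul_comm] using congr_fun (h j) i

lemma sum_smul_vecMulVec_self (φ : ι → ι → ℝ) (ρ : ι → ℝ) :
    ∑ i, ρ i • vecMulVec (φ i) (φ i) = (of φ)ᵀ * diagonal ρ * (of φ)ᵀᵀ := by
  ext i j
  rw [mul_apply]
  simp only [Matrix.sum_apply, Matrix.smul_apply, vecMulVec_apply, smul_eq_mul, mul_diagonal,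
    transpose_apply, of_apply]
  exact Finset.sum_congr rfl fun k _ ↦ by ring

end Orthogonal

section FreeEnergy

variable {n : ℕ}

lemma matEntropy_eq_neg_sum_binEntropy {P : Matrix (Fin n) (Fin n) ℝ} (hP : P.IsHermitian) :
    matEntropy P = -∑ i, binEntropy (hP.eigenvalues i) := by
  simp only [matEntropy, dif_pos hP, binEntropy, log_inv, ← Finset.sum_neg_distrib]
  exact Finset.sum_congr rfl fun i _ ↦ by ring

lemma neg_sum_binEntropy_diag_le_matEntropy {P Φ : Matrix (Fin n) (Fin n) ℝ}
    (hP : P.PosSemidef) (hP' : (1 - P).PosSemidef) (hΦ : Φᵀ * Φ = 1) :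
    -∑ i, binEntropy ((Φᵀ * P * Φ) i i) ≤ matEntropy P := by
  obtain ⟨U, hU, hPU⟩ := hP.isHermitian.exists_orthogonal_diagonalization
  have he : ∀ i, hP.isHermitian.eigenvalues i ∈ Set.Icc 0 1 := fun i ↦ by
    simpa [hPU, transpose_mul_conj_mul_eq_self hU] using
      diag_transpose_mul_mul_mem_Icc hP hP' hU i
  rw [matEntropy_eq_neg_sum_binEntropy hP.isHermitian, neg_le_neg_iff]
  conv_rhs => rw [hPU]
  exact sum_binEntropy_le_sum_binEntropy_diag hU hΦ he

lemma matEntropy_mul_diagonal_mul_transpose_le {Φ : Matrix (Fin n) (Fin n) ℝ}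
    (hΦ : Φᵀ * Φ = 1) {d : Fin n → ℝ} (hd : ∀ i, d i ∈ Set.Icc 0 1) :
    matEntropy (Φ * diagonal d * Φᵀ) ≤ -∑ i, binEntropy (d i) := by
  have hP : (Φ * diagonal d * Φᵀ).IsHermitian := by
    simp [IsHermitian, conjTranspose_eq_transpose_of_trivial, transpose_mul, Matrix.mul_assoc]
  obtain ⟨U, hU, hPU⟩ := hP.exists_orthogonal_diagonalization
  have he : ∀ i, (Uᵀ * (Φ * diagonal d * Φᵀ) * U) i i = hP.eigenvalues i := fun i ↦ by
    conv_lhs => rw [hPU, transpose_mul_conj_mul_eq_self hU, diagonal_apply_eq]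
  rw [matEntropy_eq_neg_sum_binEntropy hP, neg_le_neg_iff]
  simpa [he] using sum_binEntropy_le_sum_binEntropy_diag hΦ hU hd

variable {β : ℝ} {H Φ : Matrix (Fin n) (Fin n) ℝ} {lam : Fin n → ℝ}

lemma sum_mul_sub_binEntropy_diag_le_freeEnergy (hβ : 0 < β) (hΦ : Φᵀ * Φ = 1)
    (hHΦ : H * Φ = Φ * diagonal lam) {P : Matrix (Fin n) (Fin n) ℝ} (hP : P.PosSemidef)
    (hP' : (1 - P).PosSemidef) :
    ∑ i, (lam i * (Φᵀ * P * Φ) i i - β⁻¹ * binEntropy ((Φᵀ * P * Φ) i i)) ≤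
      freeEnergy β H P := by
  have := mul_le_mul_of_nonneg_left (neg_sum_binEntropy_diag_le_matEntropy hP hP' hΦ)
    (inv_nonneg.mpr hβ.le)
  rw [freeEnergy, trace_mul_eq_sum_mul_diag hΦ hHΦ, Finset.sum_sub_distrib, ← Finset.mul_sum]
  linarith

lemma freeEnergy_mul_diagonal_mul_transpose_le (hβ : 0 < β) (hΦ : Φᵀ * Φ = 1)
    (hHΦ : H * Φ = Φ * diagonal lam) {d : Fin n → ℝ} (hd : ∀ i, d i ∈ Set.Icc 0 1) :
    freeEnergy β H (Φ * diagonal d * Φᵀ) ≤ ∑ i, (lam i * d i - β⁻¹ * binEntropy (d i)) := by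
  have := mul_le_mul_of_nonneg_left (matEntropy_mul_diagonal_mul_transpose_le hΦ hd)
    (inv_nonneg.mpr hβ.le)
  rw [freeEnergy, trace_mul_eq_sum_mul_diag hΦ hHΦ, transpose_mul_conj_mul_eq_self hΦ,
    Finset.sum_sub_distrib, ← Finset.mul_sum]
  simp only [diagonal_apply_eq]
  linarith

lemma mul_diagonal_mul_transpose_mem_CN {N : ℕ} (hΦ : Φᵀ * Φ = 1) {d : Fin n → ℝ}
    (hd : ∀ i, d i ∈ Set.Icc 0 1) (hsum : ∑ i, d i = N) : Φ * diagonal d * Φᵀ ∈ CN n N := by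
  have psd {e : Fin n → ℝ} (he : 0 ≤ e) : (Φ * diagonal e * Φᵀ).PosSemidef := by
    simpa [conjTranspose_eq_transpose_of_trivial] using
      (PosSemidef.diagonal he).mul_mul_conjTranspose_same Φ
  have hsub : 1 - Φ * diagonal d * Φᵀ = Φ * diagonal (1 - d) * Φᵀ := by
    rw [show diagonal (1 - d) = 1 - diagonal d from (diagonal_sub 1 d).symm, Matrix.mul_sub,
      Matrix.sub_mul, Matrix.mul_one, mul_eq_one_comm.mp hΦ]
  refine ⟨?_, ?_, psd fun i ↦ (hd i).1, hsub ▸ psd fun i ↦ sub_nonneg.mpr (hd i).2⟩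
  · simp [IsSymm, transpose_mul, Matrix.mul_assoc]
  · rw [trace_mul_comm, ← Matrix.mul_assoc, hΦ, Matrix.one_mul, trace_diagonal, hsum]

lemma freeEnergy_fermiDirac_le {N : ℕ} (hβ : 0 < β) (hΦ : Φᵀ * Φ = 1)
    (hHΦ : H * Φ = Φ * diagonal lam) {μ : ℝ} {ρ : Fin n → ℝ}
    (hρ : ∀ i, ρ i = (1 + exp (β * (lam i - μ)))⁻¹) (hsum : ∑ i, ρ i = N)
    {P : Matrix (Fin n) (Fin n) ℝ} (hP : P ∈ CN n N) :
    freeEnergy β H (Φ * diagonal ρ * Φᵀ) ≤ freeEnergy β H P := by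
  obtain ⟨-, htr, hpsd, hpsd'⟩ := hP
  have hp := diag_transpose_mul_mul_mem_Icc hpsd hpsd' hΦ
  have hpsum : ∑ i, (Φᵀ * P * Φ) i i = ∑ i, ρ i := by
    have : (Φᵀ * P * Φ).trace = P.trace := by
      rw [trace_mul_cycle, mul_eq_one_comm.mp hΦ, Matrix.one_mul]
    rw [hsum, ← htr, ← this]
    rfl
  calc freeEnergy β H (Φ * diagonal ρ * Φᵀ)
      ≤ ∑ i, (lam i * ρ i - β⁻¹ * binEntropy (ρ i)) :=
        freeEnergy_mul_diagonal_mul_transpose_le hβ hΦ hHΦ fun i ↦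
          hρ i ▸ inv_one_add_exp_mem_Icc _
    _ ≤ _ := sum_mul_sub_binEntropy_le_of_fermiDirac hβ hρ hp hpsum
    _ ≤ freeEnergy β H P := sum_mul_sub_binEntropy_diag_le_freeEnergy hβ hΦ hHΦ hpsd hpsd'

end FreeEnergy

theorem stmt7_general {n N : ℕ}
    (H : Matrix (Fin n) (Fin n) ℝ)
    (lam : Fin n → ℝ)
    (φ : Fin n → Fin n → ℝ)
    (horth : ∀ i j, φ i ⬝ᵥ φ j = if i = j then (1 : ℝ) else 0)
    (heig : ∀ i, H.mulVec (φ i) = lam i • φ i)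
    (β : ℝ) (hβ : 0 < β) (μ : ℝ)
    (hμ : ∑ i, (1 + Real.exp (β * (lam i - μ)))⁻¹ = (N : ℝ))
    (ρ : Fin n → ℝ) (hρ : ∀ i, ρ i = (1 + Real.exp (β * (lam i - μ)))⁻¹)
    (Pβ : Matrix (Fin n) (Fin n) ℝ)
    (hPβ : Pβ = ∑ i, ρ i • vecMulVec (φ i) (φ i))
    (η : ℝ) (hη : 0 < η)
    (Pβη : Matrix (Fin n) (Fin n) ℝ) (hPβη : Pβη ∈ CN n N)
    (hmin : ∀ P ∈ CN n N,
      freeEnergy β H Pβη + η⁻¹ * l1Norm Pβη ≤ freeEnergy β H P + η⁻¹ * l1Norm P) :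
    0 ≤ freeEnergy β H Pβη - freeEnergy β H Pβ ∧
      freeEnergy β H Pβη - freeEnergy β H Pβ ≤ η⁻¹ * l1Norm Pβ := by
  have hΦ : (of φ)ᵀᵀ * (of φ)ᵀ = 1 := by
    rw [transpose_transpose, of_mul_transpose_eq_one_of_orthonormal horth]
  have hHΦ := mul_transpose_of_eq_transpose_of_mul_diagonal heig
  have hρsum : ∑ i, ρ i = N := by simp only [hρ, hμ]
  have hρ01 : ∀ i, ρ i ∈ Set.Icc 0 1 := fun i ↦ hρ i ▸ inv_one_add_exp_mem_Icc _
  rw [hPβ, sum_smul_vecMulVec_self]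
  have hl1 : 0 ≤ η⁻¹ * l1Norm Pβη :=
    mul_nonneg (inv_nonneg.mpr hη.le) (by unfold l1Norm; positivity)
  constructor
  · linarith [freeEnergy_fermiDirac_le hβ hΦ hHΦ hρ hρsum hPβη]
  · linarith [hmin _ (mul_diagonal_mul_transpose_mem_CN hΦ hρ01 hρsum)]

/-- Free-energy approximation at finite temperature:
`0 ≤ E_β(P_{β,η}) − E_β(P_{β,∞}) ≤ η⁻¹ ‖P_{β,∞}‖₁`. -/
theorem stmt7 {n N : ℕ} (hN1 : 1 ≤ N) (hNn : N < n)
    (H : Matrix (Fin n) (Fin n) ℝ) (hH : H.IsSymm)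
    (lam : Fin n → ℝ) (hmono : Monotone lam)
    (φ : Fin n → Fin n → ℝ)
    (horth : ∀ i j, φ i ⬝ᵥ φ j = if i = j then (1 : ℝ) else 0)
    (heig : ∀ i, H.mulVec (φ i) = lam i • φ i)
    (β : ℝ) (hβ : 0 < β) (μ : ℝ)
    (hμ : ∑ i, (1 + Real.exp (β * (lam i - μ)))⁻¹ = (N : ℝ))
    (ρ : Fin n → ℝ) (hρ : ∀ i, ρ i = (1 + Real.exp (β * (lam i - μ)))⁻¹)
    (Pβ : Matrix (Fin n) (Fin n) ℝ)
    (hPβ : Pβ = ∑ i, ρ i • vecMulVec (φ i) (φ i))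
    (η : ℝ) (hη : 0 < η)
    (Pβη : Matrix (Fin n) (Fin n) ℝ) (hPβη : Pβη ∈ CN n N)
    (hmin : ∀ P ∈ CN n N,
      freeEnergy β H Pβη + η⁻¹ * l1Norm Pβη ≤ freeEnergy β H P + η⁻¹ * l1Norm P) :
    0 ≤ freeEnergy β H Pβη - freeEnergy β H Pβ ∧
      freeEnergy β H Pβη - freeEnergy β H Pβ ≤ η⁻¹ * l1Norm Pβ :=
  stmt7_general H lam φ horth heig β hβ μ hμ ρ hρ Pβ hPβ η hη Pβη hPβη hmin
end

section
/- For every y ∈ (0,1) with y ≠ 1/2 and every x ∈ [0,1], one has x·ln(x/y) + (1−x)·ln((1−x)/(1−y)) ≥ (ln((1−y)/y) / (1−2y)) · (x−y)², where the terms x·ln(x/y) and (1−x)·ln((1−x)/(1−y)) are interpreted as 0 when x = 0 and x = 1 respectively. -/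
/-!
Put `C = log((1-y)/y)/(1-2y)` and `F t = D(t‖y) - C (t-y)²`, where `D` is the binary relative
entropy. Then `F y = F (1-y) = 0` and `F' t = logit t - logit y - 2C(t-y)`. For `y < 1/2`,
`F'` vanishes at `y` and at `1/2`, so concavity of `logit` on `(0, 1/2]` gives `F'` the sign of
`t - y` there; as `F'` is odd about `1/2`, it has the sign of `t - (1-y)` on `[1/2, 1)`. Hence
`F ≥ 0`, with minima at `y` and `1-y`. The case `y > 1/2` follows from `D(1-x‖1-y) = D(x‖y)`.
-/

open Real Set

noncomputable def logit (t : ℝ) : ℝ := log t - log (1 - t)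

lemma logit_one_sub (t : ℝ) : logit (1 - t) = -logit t := by
  simp only [logit, sub_sub_cancel, neg_sub]

lemma logit_half : logit (1 / 2) = 0 := by
  norm_num [logit]

lemma hasDerivAt_logit {t : ℝ} (ht0 : 0 < t) (ht1 : t < 1) :
    HasDerivAt logit (t * (1 - t))⁻¹ t := by
  have hlog₁ : HasDerivAt (fun s ↦ log (1 - s)) (-1 / (1 - t)) t := by
    simpa using ((hasDerivAt_id t).const_sub 1).log (sub_ne_zero.2 ht1.ne')
  refine ((hasDerivAt_log ht0.ne').sub hlog₁).congr_deriv ?_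
  field_simp [sub_ne_zero.2 ht1.ne']
  ring

lemma concaveOn_logit : ConcaveOn ℝ (Ioc 0 (1 / 2)) logit := by
  have hderiv : ∀ t ∈ Ioo (0 : ℝ) (1 / 2), HasDerivAt logit (t * (1 - t))⁻¹ t :=
    fun t ht ↦ hasDerivAt_logit ht.1 (by linarith [ht.2])
  refine AntitoneOn.concaveOn_of_deriv (convex_Ioc 0 (1 / 2)) ?_ ?_ ?_
  · intro t ht
    exact (hasDerivAt_logit ht.1 (by linarith [ht.2])).continuousAt.continuousWithinAt
  · rw [interior_Ioc]
    exact fun t ht ↦ (hderiv t ht).differentiableAt.differentiableWithinAt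
  · rw [interior_Ioc]
    intro s hs t ht hst
    rw [(hderiv s hs).deriv, (hderiv t ht).deriv]
    exact inv_anti₀ (mul_pos hs.1 (by linarith [hs.2])) (by nlinarith [hs.2, ht.2])

noncomputable def binaryKL (x y : ℝ) : ℝ :=
  x * log (x / y) + (1 - x) * log ((1 - x) / (1 - y))

lemma binaryKL_one_sub_one_sub (x y : ℝ) : binaryKL (1 - x) (1 - y) = binaryKL x y := by
  simp only [binaryKL, sub_sub_cancel]
  ring

lemma binaryKL_self (y : ℝ) : binaryKL y y = 0 := by
  rcases eq_or_ne y 0 with rfl | hy0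
  · simp [binaryKL]
  rcases eq_or_ne (1 - y) 0 with hy1 | hy1
  · simp [binaryKL, hy1]
  simp [binaryKL, div_self hy0, div_self hy1]

-- Also at `x = 0` and `x = 1`, since `log 0 = 0`.
lemma binaryKL_eq {y : ℝ} (hy0 : y ≠ 0) (hy1 : 1 - y ≠ 0) (x : ℝ) :
    binaryKL x y = x * log x + (1 - x) * log (1 - x) - x * log y - (1 - x) * log (1 - y) := by
  have mul_log_div : ∀ {a b : ℝ}, b ≠ 0 → a * log (a / b) = a * log a - a * log b := by
    intro a b hb
    rcases eq_or_ne a 0 with rfl | ha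
    · simp
    · rw [log_div ha hb]
      ring
  rw [binaryKL, mul_log_div hy0, mul_log_div hy1]
  ring

lemma binaryKL_one_sub_self {y : ℝ} (hy0 : y ≠ 0) (hy1 : 1 - y ≠ 0) :
    binaryKL (1 - y) y = -((1 - 2 * y) * logit y) := by
  rw [binaryKL_eq hy0 hy1, sub_sub_cancel, logit]
  ring

lemma continuous_binaryKL_left {y : ℝ} (hy0 : y ≠ 0) (hy1 : 1 - y ≠ 0) :
    Continuous (binaryKL · y) := by
  simp only [binaryKL_eq hy0 hy1]
  have h₁ : Continuous fun x : ℝ ↦ (1 - x) * log (1 - x) :=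
    continuous_mul_log.comp (continuous_sub_left 1)
  have h₀ : Continuous fun x : ℝ ↦ x * log x := continuous_mul_log
  fun_prop

lemma hasDerivAt_binaryKL_left {y t : ℝ} (hy0 : y ≠ 0) (hy1 : 1 - y ≠ 0) (ht0 : 0 < t)
    (ht1 : t < 1) : HasDerivAt (binaryKL · y) (logit t - logit y) t := by
  simp only [binaryKL_eq hy0 hy1]
  have h₁ := (hasDerivAt_mul_log (sub_ne_zero.2 ht1.ne')).comp t ((hasDerivAt_id t).const_sub 1)
  have h₂ := ((hasDerivAt_mul_log ht0.ne').add h₁).sub ((hasDerivAt_id t).mul_const (log y))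
  refine (h₂.sub (((hasDerivAt_id t).const_sub 1).mul_const (log (1 - y)))).congr_deriv ?_
  simp only [logit]
  ring

lemma isMinOn_Icc_of_hasDerivAt_mul_sub_nonneg {f f' : ℝ → ℝ} {a b c : ℝ}
    (hf : ContinuousOn f (Icc a b)) (hc : c ∈ Icc a b)
    (hf' : ∀ t ∈ Ioo a b, HasDerivAt f (f' t) t) (hsign : ∀ t ∈ Ioo a b, 0 ≤ f' t * (t - c)) :
    IsMinOn f (Icc a b) c := by
  refine isMinOn_Icc_of_anti_mono ?_ ?_
  · refine antitoneOn_of_hasDerivWithinAt_nonpos (f' := f') (convex_Icc a c)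
      (hf.mono (Icc_subset_Icc_right hc.2)) (fun t ht ↦ ?_) (fun t ht ↦ ?_) <;>
      rw [interior_Icc] at ht
    · exact (hf' t ⟨ht.1, ht.2.trans_le hc.2⟩).hasDerivWithinAt
    · exact nonpos_of_mul_nonneg_left (hsign t ⟨ht.1, ht.2.trans_le hc.2⟩) (sub_neg.2 ht.2)
  · refine monotoneOn_of_hasDerivWithinAt_nonneg (f' := f') (convex_Icc c b)
      (hf.mono (Icc_subset_Icc_left hc.1)) (fun t ht ↦ ?_) (fun t ht ↦ ?_) <;>
      rw [interior_Icc] at ht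
    · exact (hf' t ⟨hc.1.trans_lt ht.1, ht.2⟩).hasDerivWithinAt
    · exact nonneg_of_mul_nonneg_left (hsign t ⟨hc.1.trans_lt ht.1, ht.2⟩) (sub_pos.2 ht.1)

section Gap

variable {y C : ℝ}

lemma logit_sub_sub_mul_nonneg_of_le_half (hy0 : 0 < y) (hy : y < 1 / 2)
    (hC : C * (1 - 2 * y) = -logit y) {t : ℝ} (ht0 : 0 < t) (ht : t ≤ 1 / 2) :
    0 ≤ (logit t - logit y - 2 * C * (t - y)) * (t - y) := by
  rcases eq_or_ne t y with rfl | hty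
  · simp
  have hslope : slope logit y (1 / 2) ≤ slope logit y t :=
    concaveOn_logit.slope_anti ⟨hy0, hy.le⟩ ⟨⟨ht0, ht⟩, hty⟩ ⟨⟨by norm_num, le_rfl⟩, hy.ne'⟩ ht
  have hhalf : slope logit y (1 / 2) = 2 * C := by
    rw [slope_def_field, logit_half, div_eq_iff (by linarith)]
    linear_combination -hC
  rw [hhalf, slope_def_field] at hslope
  have hty' : t - y ≠ 0 := sub_ne_zero.2 hty
  calc 0 ≤ ((logit t - logit y) / (t - y) - 2 * C) * (t - y) ^ 2 :=
        mul_nonneg (sub_nonneg.2 hslope) (sq_nonneg _)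
    _ = (logit t - logit y - 2 * C * (t - y)) * (t - y) := by
        field_simp

lemma logit_sub_sub_mul_nonneg_of_half_le (hy0 : 0 < y) (hy : y < 1 / 2)
    (hC : C * (1 - 2 * y) = -logit y) {t : ℝ} (ht : 1 / 2 ≤ t) (ht1 : t < 1) :
    0 ≤ (logit t - logit y - 2 * C * (t - y)) * (t - (1 - y)) := by
  have h := logit_sub_sub_mul_nonneg_of_le_half hy0 hy hC (t := 1 - t) (by linarith) (by linarith)
  rw [logit_one_sub] at h
  linear_combination h - 2 * (1 - t - y) * hC

theorem mul_sq_le_binaryKL_of_lt_half (hy0 : 0 < y) (hy : y < 1 / 2)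
    (hC : C * (1 - 2 * y) = -logit y) {x : ℝ} (hx0 : 0 ≤ x) (hx1 : x ≤ 1) :
    C * (x - y) ^ 2 ≤ binaryKL x y := by
  have hy0' : y ≠ 0 := hy0.ne'
  have hy1' : 1 - y ≠ 0 := by linarith
  set F : ℝ → ℝ := fun t ↦ binaryKL t y - C * (t - y) ^ 2
  have hFcont : Continuous F := (continuous_binaryKL_left hy0' hy1').sub (by fun_prop)
  have hF' : ∀ t ∈ Ioo (0 : ℝ) 1, HasDerivAt F (logit t - logit y - 2 * C * (t - y)) t := by
    intro t ht
    have hsq : HasDerivAt (fun t ↦ C * (t - y) ^ 2) (C * (2 * (t - y))) t := by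
      simpa using (((hasDerivAt_id t).sub_const y).pow 2).const_mul C
    refine ((hasDerivAt_binaryKL_left hy0' hy1' ht.1 ht.2).sub hsq).congr_deriv ?_
    ring
  have hFy : F y = 0 := by simp [F, binaryKL_self]
  have hF1y : F (1 - y) = 0 := by
    simp only [F, binaryKL_one_sub_self hy0' hy1']
    linear_combination (-(1 - 2 * y)) * hC
  suffices 0 ≤ F x by simpa [F, sub_nonneg] using this
  rcases le_total x (1 / 2) with hx | hx
  · have hmin := isMinOn_Icc_of_hasDerivAt_mul_sub_nonneg hFcont.continuousOn
      ⟨hy0.le, hy.le⟩ (fun t ht ↦ hF' t ⟨ht.1, by linarith [ht.2]⟩)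
      (fun t ht ↦ logit_sub_sub_mul_nonneg_of_le_half hy0 hy hC ht.1 ht.2.le)
    simpa [hFy] using hmin ⟨hx0, hx⟩
  · have hmin := isMinOn_Icc_of_hasDerivAt_mul_sub_nonneg hFcont.continuousOn
      ⟨by linarith, by linarith⟩ (fun t ht ↦ hF' t ⟨by linarith [ht.1], ht.2⟩)
      (fun t ht ↦ logit_sub_sub_mul_nonneg_of_half_le hy0 hy hC ht.1.le ht.2)
    simpa [hF1y] using hmin ⟨hx, hx1⟩

end Gap

/-- Quadratic lower bound for the binary (Fermi–Dirac)
relative entropy: for `y ∈ (0,1)`, `y ≠ 1/2`, and `x ∈ [0,1]`,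
`x ln(x/y) + (1−x) ln((1−x)/(1−y)) ≥ (ln((1−y)/y)/(1−2y)) (x−y)²`.
(The terms `x ln(x/y)` and `(1−x) ln((1−x)/(1−y))` vanish for `x = 0` and
`x = 1` respectively; in Lean this holds automatically since they carry the
factors `x` and `1 − x`.) -/
theorem stmt10 (y : ℝ) (hy0 : 0 < y) (hy1 : y < 1) (hy : y ≠ 1 / 2)
    (x : ℝ) (hx0 : 0 ≤ x) (hx1 : x ≤ 1) :
    x * Real.log (x / y) + (1 - x) * Real.log ((1 - x) / (1 - y)) ≥
      (Real.log ((1 - y) / y) / (1 - 2 * y)) * (x - y) ^ 2 := by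
  set C := Real.log ((1 - y) / y) / (1 - 2 * y)
  have hC : C * (1 - 2 * y) = -logit y := by
    rw [div_mul_cancel₀ _ (fun h ↦ hy (by linarith)), log_div (by linarith) hy0.ne', logit]
    ring
  change C * (x - y) ^ 2 ≤ binaryKL x y
  rcases lt_or_gt_of_ne hy with hlt | hgt
  · exact mul_sq_le_binaryKL_of_lt_half hy0 hlt hC hx0 hx1
  · have hC' : C * (1 - 2 * (1 - y)) = -logit (1 - y) := by
      rw [logit_one_sub]
      linear_combination -hC
    have h := mul_sq_le_binaryKL_of_lt_half (by linarith) (by linarith) hC'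
      (x := 1 - x) (by linarith) (by linarith)
    rwa [binaryKL_one_sub_one_sub, show (1 - x - (1 - y)) ^ 2 = (x - y) ^ 2 by ring] at h
end

section
/- For every y ∈ (0,1) and every x ∈ [0,1], one has x·ln(x/y) + (1−x)·ln((1−x)/(1−y)) ≥ max( |ln((1−y)/y)|, 1 ) · (x−y)², where the terms x·ln(x/y) and (1−x)·ln((1−x)/(1−y)) are interpreted as 0 when x = 0 and x = 1 respectively. -/
/-!
Write `D(x‖y)` for the left-hand side and `L = log ((1 - y) / y)`. The gap
`g(t) = D(t‖y) - c (t - y)²` satisfies `g(y) = g'(y) = 0` and `g''(t) = 1 / (t (1 - t)) - 2c`.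
For `c ≤ 2` it is convex on `[0, 1]`, so `g ≥ 0` (binary Pinsker). Otherwise `c = |L| > 2`, and
by the symmetry `(x, y) ↦ (1 - x, 1 - y)` we may take `c = L`. Then `g` is convex outside the
roots `a ≤ b` of `2L t (1 - t) = 1` and concave between them. As `2yL < 1`, `y < a`, so `g ≥ 0`
on `[0, a]`; on `[b, 1]`, `g` lies above its tangent at `1 - y`, which is `2Ly (2t - 1) ≥ 0`; on
`[a, b]` concavity puts the minimum of `g` at `a` or `b`.
-/

open Real Set

noncomputable def binKL (x y : ℝ) : ℝ := x * log (x / y) + (1 - x) * log ((1 - x) / (1 - y))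

lemma binKL_one_sub_one_sub (x y : ℝ) : binKL (1 - x) (1 - y) = binKL x y := by
  simp only [binKL, sub_sub_cancel]
  ring

lemma binKL_eq_mul_log_add_binEntropy_sub {y : ℝ} (hy0 : y ≠ 0) (hy1 : y ≠ 1) (x : ℝ) :
    binKL x y = (x - y) * log ((1 - y) / y) + binEntropy y - binEntropy x := by
  have hy1' : 1 - y ≠ 0 := sub_ne_zero.2 hy1.symm
  have h₁ : x * log (x / y) = x * log x - x * log y := by
    rcases eq_or_ne x 0 with rfl | hx
    · simp
    · rw [log_div hx hy0]; ring
  have h₂ : (1 - x) * log ((1 - x) / (1 - y)) =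
      (1 - x) * log (1 - x) - (1 - x) * log (1 - y) := by
    rcases eq_or_ne (1 - x) 0 with hx | hx
    · simp [hx]
    · rw [log_div hx hy1']; ring
  rw [binKL, h₁, h₂, log_div hy1' hy0, binEntropy_eq_negMulLog_add_negMulLog_one_sub,
    binEntropy_eq_negMulLog_add_negMulLog_one_sub, negMulLog, negMulLog, negMulLog, negMulLog]
  ring

lemma continuous_binKL_left {y : ℝ} (hy0 : y ≠ 0) (hy1 : y ≠ 1) :
    Continuous (binKL · y) := by
  simp only [binKL_eq_mul_log_add_binEntropy_sub hy0 hy1]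
  fun_prop

lemma hasDerivAt_binKL_left {x y : ℝ} (hx0 : x ≠ 0) (hx1 : x ≠ 1) (hy0 : y ≠ 0)
    (hy1 : y ≠ 1) :
    HasDerivAt (binKL · y) (log ((1 - y) / y) + log x - log (1 - x)) x := by
  simp only [binKL_eq_mul_log_add_binEntropy_sub hy0 hy1]
  have h := (((hasDerivAt_id' x).sub_const y).mul_const (log ((1 - y) / y))).add_const
    (binEntropy y) |>.fun_sub (hasDerivAt_binEntropy hx0 hx1)
  exact h.congr_deriv (by ring)

lemma hasDerivAt_log_sub_log_one_sub {x : ℝ} (hx0 : x ≠ 0) (hx1 : x ≠ 1) :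
    HasDerivAt (fun t ↦ log t - log (1 - t)) (1 / (x * (1 - x))) x := by
  have hx1' : 1 - x ≠ 0 := sub_ne_zero.2 hx1.symm
  have h := (hasDerivAt_log hx0).fun_sub (((hasDerivAt_id' x).const_sub 1).log hx1')
  exact h.congr_deriv (by field_simp; ring)

lemma ConvexOn.add_mul_sub_le_of_hasDerivAt {S : Set ℝ} {f : ℝ → ℝ} {x y f' : ℝ}
    (hf : ConvexOn ℝ S f) (hx : x ∈ S) (hy : y ∈ S) (hd : HasDerivAt f f' x) :
    f x + f' * (y - x) ≤ f y := by
  rcases lt_trichotomy x y with hxy | rfl | hxy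
  · have h := hf.le_slope_of_hasDerivAt hx hy hxy hd
    rw [slope_def_field, le_div_iff₀ (sub_pos.2 hxy)] at h
    linarith
  · simp
  · have h := hf.slope_le_of_hasDerivAt hy hx hxy hd
    rw [slope_def_field, div_le_iff₀ (sub_pos.2 hxy)] at h
    linarith

section

variable {y c p q : ℝ}

lemma hasDerivAt_binKL_sub_mul_sq {x : ℝ} (hx0 : x ≠ 0) (hx1 : x ≠ 1) (hy0 : y ≠ 0)
    (hy1 : y ≠ 1) :
    HasDerivAt (fun t ↦ binKL t y - c * (t - y) ^ 2)
      (log ((1 - y) / y) + (log x - log (1 - x)) - 2 * c * (x - y)) x := by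
  have h := (hasDerivAt_binKL_left hx0 hx1 hy0 hy1).fun_sub
    ((((hasDerivAt_id' x).sub_const y).pow 2).const_mul c)
  exact h.congr_deriv (by ring)

lemma hasDerivAt_log_div_add_log_sub_log_one_sub {x : ℝ} (hx0 : x ≠ 0) (hx1 : x ≠ 1) :
    HasDerivAt (fun t ↦ log ((1 - y) / y) + (log t - log (1 - t)) - 2 * c * (t - y))
      (1 / (x * (1 - x)) - 2 * c) x := by
  have h := ((hasDerivAt_log_sub_log_one_sub hx0 hx1).const_add (log ((1 - y) / y))).fun_sub
    (((hasDerivAt_id' x).sub_const y).const_mul (2 * c))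
  exact h.congr_deriv (by ring)

lemma convexOn_binKL_sub_mul_sq (hy0 : y ≠ 0) (hy1 : y ≠ 1) (hp : 0 ≤ p) (hq : q ≤ 1)
    (hc : ∀ z ∈ Ioo p q, 2 * c * (z * (1 - z)) ≤ 1) :
    ConvexOn ℝ (Icc p q) (fun t ↦ binKL t y - c * (t - y) ^ 2) := by
  have hz : ∀ z ∈ Ioo p q, 0 < z ∧ z < 1 :=
    fun z hz ↦ ⟨hp.trans_lt hz.1, hz.2.trans_le hq⟩
  refine convexOn_of_hasDerivWithinAt2_nonneg (convex_Icc p q)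
    (f' := fun x ↦ log ((1 - y) / y) + (log x - log (1 - x)) - 2 * c * (x - y))
    (f'' := fun x ↦ 1 / (x * (1 - x)) - 2 * c)
    (((continuous_binKL_left hy0 hy1).sub (by fun_prop)).continuousOn) ?_ ?_ ?_ <;>
    rw [interior_Icc] <;> intro z hzI <;> obtain ⟨hz0, hz1⟩ := hz z hzI
  · exact (hasDerivAt_binKL_sub_mul_sq hz0.ne' hz1.ne hy0 hy1).hasDerivWithinAt
  · exact (hasDerivAt_log_div_add_log_sub_log_one_sub hz0.ne' hz1.ne).hasDerivWithinAt
  · rw [sub_nonneg, le_div_iff₀ (by nlinarith)]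
    exact hc z hzI

lemma concaveOn_binKL_sub_mul_sq (hy0 : y ≠ 0) (hy1 : y ≠ 1) (hp : 0 ≤ p) (hq : q ≤ 1)
    (hc : ∀ z ∈ Ioo p q, 1 ≤ 2 * c * (z * (1 - z))) :
    ConcaveOn ℝ (Icc p q) (fun t ↦ binKL t y - c * (t - y) ^ 2) := by
  have hz : ∀ z ∈ Ioo p q, 0 < z ∧ z < 1 :=
    fun z hz ↦ ⟨hp.trans_lt hz.1, hz.2.trans_le hq⟩
  refine concaveOn_of_hasDerivWithinAt2_nonpos (convex_Icc p q)
    (f' := fun x ↦ log ((1 - y) / y) + (log x - log (1 - x)) - 2 * c * (x - y))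
    (f'' := fun x ↦ 1 / (x * (1 - x)) - 2 * c)
    (((continuous_binKL_left hy0 hy1).sub (by fun_prop)).continuousOn) ?_ ?_ ?_ <;>
    rw [interior_Icc] <;> intro z hzI <;> obtain ⟨hz0, hz1⟩ := hz z hzI
  · exact (hasDerivAt_binKL_sub_mul_sq hz0.ne' hz1.ne hy0 hy1).hasDerivWithinAt
  · exact (hasDerivAt_log_div_add_log_sub_log_one_sub hz0.ne' hz1.ne).hasDerivWithinAt
  · rw [sub_nonpos, div_le_iff₀ (by nlinarith)]
    exact hc z hzI

end

lemma two_mul_mul_log_one_sub_div_lt_one {y : ℝ} (hy0 : 0 < y) (hy1 : y < 1) :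
    2 * y * log ((1 - y) / y) < 1 := by
  have hsplit : log ((1 - y) / y) = log 2 + log ((1 - y) / (2 * y)) := by
    rw [← log_mul two_ne_zero (by positivity)]
    congr 1
    field_simp
  have hle : 2 * y * log ((1 - y) / (2 * y)) ≤ 1 - 3 * y :=
    calc 2 * y * log ((1 - y) / (2 * y)) ≤ 2 * y * ((1 - y) / (2 * y) - 1) := by
          gcongr
          exact log_le_sub_one_of_pos (by positivity)
      _ = 1 - 3 * y := by field_simp; ring
  rw [hsplit]
  nlinarith [log_two_lt_d9]

lemma exists_add_eq_one_mul_eq {P : ℝ} (hP0 : 0 < P) (hP : P ≤ 1 / 4) :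
    ∃ a b : ℝ, 0 < a ∧ a ≤ b ∧ a + b = 1 ∧ a * b = P := by
  have hs := sq_sqrt (by linarith : 0 ≤ 1 - 4 * P)
  have hs0 := sqrt_nonneg (1 - 4 * P)
  refine ⟨(1 - √(1 - 4 * P)) / 2, (1 + √(1 - 4 * P)) / 2, ?_, by linarith, by ring, ?_⟩
  · nlinarith
  · linear_combination -hs / 4

lemma mul_sq_le_binKL_of_mem_Icc_zero {x y c a : ℝ} (hy0 : 0 < y) (hy1 : y < 1) (hya : y ≤ a)
    (ha1 : a ≤ 1) (hc : ∀ z ∈ Ioo 0 a, 2 * c * (z * (1 - z)) ≤ 1) (hx : x ∈ Icc 0 a) :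
    c * (x - y) ^ 2 ≤ binKL x y := by
  have h := (convexOn_binKL_sub_mul_sq hy0.ne' hy1.ne le_rfl ha1 hc).add_mul_sub_le_of_hasDerivAt
    ⟨hy0.le, hya⟩ hx (hasDerivAt_binKL_sub_mul_sq hy0.ne' hy1.ne hy0.ne' hy1.ne)
  rw [log_div (by linarith) hy0.ne'] at h
  simp only [binKL, div_self hy0.ne', div_self (by linarith : 1 - y ≠ 0), log_one] at h ⊢
  linarith

lemma two_mul_sq_le_binKL {x y : ℝ} (hy0 : 0 < y) (hy1 : y < 1) (hx : x ∈ Icc 0 1) :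
    2 * (x - y) ^ 2 ≤ binKL x y :=
  mul_sq_le_binKL_of_mem_Icc_zero hy0 hy1 hy1.le le_rfl
    (fun z _ ↦ by nlinarith [sq_nonneg (2 * z - 1)]) hx

lemma binKL_one_sub_self (y : ℝ) :
    binKL (1 - y) y = (1 - 2 * y) * log ((1 - y) / y) := by
  have : y / (1 - y) = ((1 - y) / y)⁻¹ := (inv_div _ _).symm
  rw [binKL, sub_sub_cancel, this, log_inv]
  ring

lemma log_mul_sq_le_binKL_of_mem_Icc_one {x y b : ℝ} (hy0 : 0 < y) (hb : 1 / 2 ≤ b)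
    (hby : b ≤ 1 - y)
    (hc : ∀ z ∈ Ioo b 1, 2 * log ((1 - y) / y) * (z * (1 - z)) ≤ 1) (hx : x ∈ Icc b 1) :
    log ((1 - y) / y) * (x - y) ^ 2 ≤ binKL x y := by
  have hy1 : y < 1 := by linarith
  have hL : 0 ≤ log ((1 - y) / y) := log_nonneg (by rw [le_div_iff₀ hy0]; linarith)
  have h := (convexOn_binKL_sub_mul_sq hy0.ne' hy1.ne (by linarith) le_rfl hc)
    |>.add_mul_sub_le_of_hasDerivAt ⟨hby, by linarith⟩ hx
    (hasDerivAt_binKL_sub_mul_sq (by linarith) (by linarith) hy0.ne' hy1.ne)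
  rw [binKL_one_sub_self, sub_sub_cancel, ← log_div (by linarith) hy0.ne'] at h
  have h2x : 0 ≤ log ((1 - y) / y) * y * (2 * x - 1) :=
    mul_nonneg (mul_nonneg hL hy0.le) (by linarith [hx.1])
  linarith

lemma log_mul_sq_le_binKL {x y : ℝ} (hy0 : 0 < y) (hy1 : y < 1) (hL : 2 ≤ log ((1 - y) / y))
    (hx : x ∈ Icc 0 1) : log ((1 - y) / y) * (x - y) ^ 2 ≤ binKL x y := by
  set L := log ((1 - y) / y)
  obtain ⟨a, b, ha0, hab, hab1, habL⟩ := exists_add_eq_one_mul_eq (P := 1 / (2 * L))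
    (by positivity) (by rw [div_le_div_iff₀ (by positivity) (by norm_num)]; linarith)
  have hcurv : ∀ z, 2 * L * (z * (1 - z)) - 1 = 2 * L * ((z - a) * (b - z)) := by
    have h2L : 2 * L * (a * b) = 1 := by rw [habL]; field_simp
    intro z
    linear_combination (-2 * L * z) * hab1 + h2L
  have hya : y < a := by
    have hyab : y < a * b := by
      rw [habL, lt_div_iff₀ (by positivity)]
      linarith [two_mul_mul_log_one_sub_div_lt_one hy0 hy1]
    nlinarith
  have hleft : ∀ z ∈ Icc 0 a, L * (z - y) ^ 2 ≤ binKL z y := by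
    refine fun z hz ↦ mul_sq_le_binKL_of_mem_Icc_zero hy0 hy1 hya.le (by linarith)
      (fun w hw ↦ ?_) hz
    nlinarith [hcurv w, mul_nonpos_of_nonpos_of_nonneg (by linarith [hw.2] : w - a ≤ 0)
      (by linarith [hw.2] : 0 ≤ b - w)]
  have hright : ∀ z ∈ Icc b 1, L * (z - y) ^ 2 ≤ binKL z y := by
    refine fun z hz ↦ log_mul_sq_le_binKL_of_mem_Icc_one hy0 (by linarith) (by linarith)
      (fun w hw ↦ ?_) hz
    nlinarith [hcurv w, mul_nonpos_of_nonneg_of_nonpos (by linarith [hw.1] : 0 ≤ w - a)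
      (by linarith [hw.1] : b - w ≤ 0)]
  have hmiddle : ConcaveOn ℝ (Icc a b) (fun t ↦ binKL t y - L * (t - y) ^ 2) := by
    refine concaveOn_binKL_sub_mul_sq hy0.ne' hy1.ne ha0.le (by linarith) fun w hw ↦ ?_
    nlinarith [hcurv w, mul_nonneg (by linarith [hw.1] : 0 ≤ w - a)
      (by linarith [hw.2] : 0 ≤ b - w)]
  rcases le_or_gt x a with hxa | hax
  · exact hleft x ⟨hx.1, hxa⟩
  rcases le_or_gt b x with hbx | hxb
  · exact hright x ⟨hbx, hx.2⟩
  have hmin := hmiddle.min_le_of_mem_Icc (left_mem_Icc.2 hab) (right_mem_Icc.2 hab)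
    ⟨hax.le, hxb.le⟩
  have ha := hleft a ⟨ha0.le, le_rfl⟩
  have hb := hright b ⟨le_rfl, by linarith⟩
  exact sub_nonneg.1 ((le_min (sub_nonneg.2 ha) (sub_nonneg.2 hb)).trans hmin)

lemma abs_log_mul_sq_le_binKL {x y : ℝ} (hy0 : 0 < y) (hy1 : y < 1)
    (hL : 2 ≤ |log ((1 - y) / y)|) (hx : x ∈ Icc 0 1) :
    |log ((1 - y) / y)| * (x - y) ^ 2 ≤ binKL x y := by
  rcases le_total 0 (log ((1 - y) / y)) with hL0 | hL0
  · rw [abs_of_nonneg hL0] at hL ⊢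
    exact log_mul_sq_le_binKL hy0 hy1 hL hx
  · have hsymm : log ((1 - (1 - y)) / (1 - y)) = -log ((1 - y) / y) := by
      rw [sub_sub_cancel, ← log_inv, inv_div]
    rw [abs_of_nonpos hL0] at hL ⊢
    have h := log_mul_sq_le_binKL (x := 1 - x) (y := 1 - y) (by linarith) (by linarith)
      (by rw [hsymm]; exact hL) ⟨by linarith [hx.2], by linarith [hx.1]⟩
    rw [hsymm, binKL_one_sub_one_sub] at h
    convert h using 2
    ring

/-- Quadratic lower bound for the binary (Fermi–Dirac)
relative entropy: for `y ∈ (0,1)` and `x ∈ [0,1]`,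
`x ln(x/y) + (1−x) ln((1−x)/(1−y)) ≥ max(|ln((1−y)/y)|, 1) (x−y)²`.
(The terms `x ln(x/y)` and `(1−x) ln((1−x)/(1−y))` vanish for `x = 0` and
`x = 1` respectively; in Lean this holds automatically since they carry the
factors `x` and `1 − x`.) -/
theorem stmt12 (y : ℝ) (hy0 : 0 < y) (hy1 : y < 1)
    (x : ℝ) (hx0 : 0 ≤ x) (hx1 : x ≤ 1) :
    x * Real.log (x / y) + (1 - x) * Real.log ((1 - x) / (1 - y)) ≥
      max |Real.log ((1 - y) / y)| 1 * (x - y) ^ 2 := by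
  show max |log ((1 - y) / y)| 1 * (x - y) ^ 2 ≤ binKL x y
  rcases le_total (max |log ((1 - y) / y)| 1) 2 with hc | hc
  · calc max |log ((1 - y) / y)| 1 * (x - y) ^ 2 ≤ 2 * (x - y) ^ 2 := by gcongr
      _ ≤ binKL x y := two_mul_sq_le_binKL hy0 hy1 ⟨hx0, hx1⟩
  · have hL : 2 ≤ |log ((1 - y) / y)| := (le_max_iff.1 hc).resolve_right (by norm_num)
    rw [max_eq_left (by linarith)]
    exact abs_log_mul_sq_le_binKL hy0 hy1 hL ⟨hx0, hx1⟩
end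

section
/- Let f : ℝ → ℝ be Lipschitz with constant L ≥ 0. Let A and B be n×n real symmetric matrices with spectral decompositions A = Σ_{i=1}^n α_i u_iu_iᵀ and B = Σ_{j=1}^n β_j v_jv_jᵀ, where (u_i) and (v_j) are orthonormal bases of ℝⁿ. Then ‖ Σ_{i=1}^n f(α_i) u_iu_iᵀ − Σ_{j=1}^n f(β_j) v_jv_jᵀ ‖_F ≤ L · ‖A − B‖_F. -/
open Matrix BigOperators

/-- Frobenius norm of a real matrix. -/
noncomputable def frobNorm {n : ℕ} (P : Matrix (Fin n) (Fin n) ℝ) : ℝ :=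
  Real.sqrt (∑ i, ∑ j, (P i j) ^ 2)

lemma swap4 {n : ℕ} (F : Fin n → Fin n → Fin n → Fin n → ℝ) :
  ∑ k, ∑ l, ∑ i, ∑ j, F k l i j = ∑ i, ∑ j, ∑ k, ∑ l, F k l i j := by
  simp_rw [← Fintype.sum_prod_type']
  exact Fintype.sum_bijective (fun x : Fin n × Fin n × Fin n × Fin n => (x.2.2.1, x.2.2.2, x.1, x.2.1))
    (Function.Involutive.bijective (fun x => rfl)) _ _ (fun x => rfl)

lemma quad {n : ℕ} (a b : Fin n → ℝ) (p q : Fin n → Fin n → ℝ) :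
  ∑ k, ∑ l, (∑ i, a i * (p i k * p i l)) * (∑ j, b j * (q j k * q j l))
  = ∑ i, ∑ j, (a i * b j) * (p i ⬝ᵥ q j)^2 := by
  simp only [dotProduct, sq, Finset.sum_mul_sum]
  rw [swap4]
  apply Finset.sum_congr rfl; intro i _
  apply Finset.sum_congr rfl; intro j _
  rw [Finset.mul_sum]
  apply Finset.sum_congr rfl; intro k _
  rw [Finset.mul_sum]
  apply Finset.sum_congr rfl; intro l _
  ring

lemma parseval {n : ℕ} (u v : Fin n → Fin n → ℝ)
    (hu : ∀ i j, u i ⬝ᵥ u j = if i = j then (1 : ℝ) else 0)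
    (hv : ∀ i j, v i ⬝ᵥ v j = if i = j then (1 : ℝ) else 0) (i : Fin n) :
    ∑ j, (u i ⬝ᵥ v j)^2 = 1 := by
  set U : Matrix (Fin n) (Fin n) ℝ := Matrix.of u with hU
  set V : Matrix (Fin n) (Fin n) ℝ := Matrix.of v with hV
  have hUU : U * Uᵀ = 1 := by
    ext a b
    simp [Matrix.mul_apply, Matrix.one_apply, ← hu a b, dotProduct, hU]
  have hVV : V * Vᵀ = 1 := by
    ext a b
    simp [Matrix.mul_apply, Matrix.one_apply, ← hv a b, dotProduct, hV]
  have hVV' : Vᵀ * V = 1 := mul_eq_one_comm.mp hVV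
  have key : (U * Vᵀ) * (U * Vᵀ)ᵀ = 1 := by
    rw [Matrix.transpose_mul, Matrix.transpose_transpose, Matrix.mul_assoc,
      ← Matrix.mul_assoc Vᵀ V Uᵀ, hVV', Matrix.one_mul, hUU]
  have := congrFun (congrFun key i) i
  simp only [Matrix.mul_apply, Matrix.transpose_apply, Matrix.one_apply_eq] at this
  rw [← this]
  apply Finset.sum_congr rfl; intro j _
  simp [Matrix.mul_apply, dotProduct, sq, hU, hV]

lemma frobSq_s14 {n : ℕ} (a b : Fin n → ℝ) (u v : Fin n → Fin n → ℝ)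
    (hu : ∀ i j, u i ⬝ᵥ u j = if i = j then (1 : ℝ) else 0)
    (hv : ∀ i j, v i ⬝ᵥ v j = if i = j then (1 : ℝ) else 0) :
    ∑ k, ∑ l, ((∑ i, a i • vecMulVec (u i) (u i)
        - ∑ j, b j • vecMulVec (v j) (v j)) k l)^2
    = ∑ i, ∑ j, (a i - b j)^2 * (u i ⬝ᵥ v j)^2 := by
  have entry : ∀ k l, (∑ i, a i • vecMulVec (u i) (u i)
      - ∑ j, b j • vecMulVec (v j) (v j)) k l
      = (∑ i, a i * (u i k * u i l)) - (∑ j, b j * (v j k * v j l)) := by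
    intro k l
    simp [Matrix.sub_apply, Matrix.sum_apply, Matrix.vecMulVec_apply, smul_eq_mul]
  have expand : ∀ S T : ℝ, (S - T)^2 = S*S - 2*(S*T) + T*T := by intro S T; ring
  conv_lhs => simp only [entry, expand, Finset.sum_add_distrib, Finset.sum_sub_distrib,
    ← Finset.mul_sum]
  rw [quad a a u u, quad a b u v, quad b b v v]
  have h1 : ∑ i, ∑ j, (a i * a j) * (u i ⬝ᵥ u j)^2 = ∑ i, (a i)^2 := by
    apply Finset.sum_congr rfl; intro i _
    rw [Finset.sum_eq_single i]
    · simp [hu, sq]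
    · intro j _ hj; simp [hu, (Ne.symm hj : ¬ i = j)]
    · simp
  have h2 : ∑ i, ∑ j, (b i * b j) * (v i ⬝ᵥ v j)^2 = ∑ i, (b i)^2 := by
    apply Finset.sum_congr rfl; intro i _
    rw [Finset.sum_eq_single i]
    · simp [hv, sq]
    · intro j _ hj; simp [hv, (Ne.symm hj : ¬ i = j)]
    · simp
  rw [h1, h2]
  have rhs : ∑ i, ∑ j, (a i - b j)^2 * (u i ⬝ᵥ v j)^2
      = ∑ i, (a i)^2 - 2 * (∑ i, ∑ j, (a i * b j) * (u i ⬝ᵥ v j)^2) + ∑ j, (b j)^2 := by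
    have expand2 : ∀ i j, (a i - b j)^2 * (u i ⬝ᵥ v j)^2
        = (a i)^2 * (u i ⬝ᵥ v j)^2 - 2 * ((a i * b j) * (u i ⬝ᵥ v j)^2)
          + (b j)^2 * (u i ⬝ᵥ v j)^2 := by intro i j; ring
    conv_lhs => simp only [expand2, Finset.sum_add_distrib, Finset.sum_sub_distrib,
      ← Finset.mul_sum]
    have hA : ∑ i, (a i)^2 * ∑ j, (u i ⬝ᵥ v j)^2 = ∑ i, (a i)^2 := by
      apply Finset.sum_congr rfl; intro i _
      rw [parseval u v hu hv i, mul_one]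
    have hB : ∑ i, ∑ j, (b j)^2 * (u i ⬝ᵥ v j)^2 = ∑ j, (b j)^2 := by
      rw [Finset.sum_comm]
      apply Finset.sum_congr rfl; intro j _
      have : ∑ i, (u i ⬝ᵥ v j)^2 = 1 := by
        have := parseval v u hv hu j
        simpa [dotProduct_comm] using this
      rw [← Finset.mul_sum, this, mul_one]
    rw [hA, hB]
  rw [rhs]

lemma lipsq (f : ℝ → ℝ) (L : ℝ) (hf : ∀ x y : ℝ, |f x - f y| ≤ L * |x - y|)
    (x y : ℝ) : (f x - f y)^2 ≤ L^2 * (x - y)^2 := by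
  have h := hf x y
  calc (f x - f y)^2 = |f x - f y|^2 := (sq_abs _).symm
    _ ≤ (L * |x - y|)^2 := by
        apply pow_le_pow_left₀ (abs_nonneg _) h
    _ = L^2 * (x - y)^2 := by rw [mul_pow, sq_abs]

/-- (Lipschitz matrix functions.) If `f` is Lipschitz with
constant `L` and `A = ∑ α_i u_i u_iᵀ`, `B = ∑ β_j v_j v_jᵀ` are spectral
decompositions of symmetric matrices with respect to orthonormal bases, then
`‖f(A) − f(B)‖_F ≤ L ‖A − B‖_F`, where `f(A) = ∑ f(α_i) u_i u_iᵀ` and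
`f(B) = ∑ f(β_j) v_j v_jᵀ`. -/
theorem stmt14 {n : ℕ} (f : ℝ → ℝ) (L : ℝ) (hL : 0 ≤ L)
    (hf : ∀ x y : ℝ, |f x - f y| ≤ L * |x - y|)
    (A B : Matrix (Fin n) (Fin n) ℝ)
    (α βe : Fin n → ℝ) (u v : Fin n → Fin n → ℝ)
    (hu : ∀ i j, u i ⬝ᵥ u j = if i = j then (1 : ℝ) else 0)
    (hv : ∀ i j, v i ⬝ᵥ v j = if i = j then (1 : ℝ) else 0)
    (hA : A = ∑ i, α i • vecMulVec (u i) (u i))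
    (hB : B = ∑ j, βe j • vecMulVec (v j) (v j)) :
    frobNorm (∑ i, f (α i) • vecMulVec (u i) (u i) -
        ∑ j, f (βe j) • vecMulVec (v j) (v j)) ≤ L * frobNorm (A - B) := by
  subst hA hB
  unfold frobNorm
  rw [frobSq_s14 α βe u v hu hv, frobSq_s14 (fun i => f (α i)) (fun j => f (βe j)) u v hu hv]
  rw [show L * Real.sqrt (∑ i, ∑ j, (α i - βe j)^2 * (u i ⬝ᵥ v j)^2)
      = Real.sqrt (L^2 * ∑ i, ∑ j, (α i - βe j)^2 * (u i ⬝ᵥ v j)^2) by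
    rw [Real.sqrt_mul (sq_nonneg L), Real.sqrt_sq hL]]
  apply Real.sqrt_le_sqrt
  rw [Finset.mul_sum]
  apply Finset.sum_le_sum; intro i _
  rw [Finset.mul_sum]
  apply Finset.sum_le_sum; intro j _
  rw [← mul_assoc]
  exact mul_le_mul_of_nonneg_right (lipsq f L hf _ _) (sq_nonneg _)
end

section
/- Let β, λ, r > 0 and let H, Q, R, B, D be n×n real symmetric matrices. For a real symmetric matrix Y define Φ_β(Y) = (I + exp(βY))⁻¹, where exp is the matrix exponential (I + exp(βY) is positive definite, hence invertible). Suppose Z* is a real symmetric matrix satisfying Z* = Φ_β( H + λ(Z* − Q + B) + r(Z* − R + D) ), and let the sequence (Z^l) of symmetric matrices be defined by a symmetric initial matrix Z^0 and Z^{l+1} = Φ_β( H + λ(Z^l − Q + B) + r(Z^l − R + D) ). Then for every l ≥ 0, ‖Z^l − Z*‖_F ≤ (β(λ+r)/4)^l · ‖Z^0 − Z*‖_F. In particular, if β(λ+r) < 4 then Z^l converges to Z* exponentially fast as l → ∞. -/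
open Matrix BigOperators

/-- The matrix Fermi–Dirac function `Φ_β(Y) = (I + exp(βY))⁻¹`, defined via the
matrix exponential and the matrix inverse (for symmetric `Y`, `I + exp(βY)` is
positive definite, hence invertible). -/
noncomputable def fermiDirac {n : ℕ} (β : ℝ) (Y : Matrix (Fin n) (Fin n) ℝ) :
    Matrix (Fin n) (Fin n) ℝ :=
  (1 + NormedSpace.exp (β • Y))⁻¹

/-!
Diagonalising `X = U diag(a) Uᵀ` and `Y = V diag(b) Vᵀ`, the matrix `Uᵀ (f(X) - f(Y)) V` has
entries `(f(aᵢ) - f(bⱼ)) Wᵢⱼ` with `W = Uᵀ V`, while `Uᵀ (X - Y) V` has entries `(aᵢ - bⱼ) Wᵢⱼ`.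
Since the Frobenius norm is invariant under orthogonal changes of basis on either side, every
`K`-Lipschitz `f : ℝ → ℝ` induces a `K`-Lipschitz map on symmetric matrices in the Frobenius norm.
Here `Φ_β` is induced by `x ↦ σ(-βx)`, where the logistic function `σ` has derivative
`σ(1 - σ) ≤ 1/4`; so `Φ_β` is `β/4`-Lipschitz and the iteration map, an affine map of slope
`λ + r` followed by `Φ_β`, contracts by the factor `β(λ + r)/4`.
-/

open Filter Topology

lemma Real.lipschitzWith_sigmoid : LipschitzWith 4⁻¹ Real.sigmoid := by
  refine lipschitzWith_of_nnnorm_deriv_le differentiable_sigmoid fun x => ?_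
  rw [← NNReal.coe_le_coe, coe_nnnorm, Real.deriv_sigmoid, Real.norm_eq_abs, NNReal.coe_inv,
    NNReal.coe_ofNat]
  have h0 := Real.sigmoid_pos x
  have h1 := Real.sigmoid_lt_one x
  dsimp only
  rw [abs_of_pos (by nlinarith)]
  nlinarith [sq_nonneg (Real.sigmoid x - 2⁻¹)]

lemma Real.lipschitzWith_sigmoid_neg_mul (β : ℝ) :
    LipschitzWith (4⁻¹ * ‖β‖₊) fun x => Real.sigmoid (-(β * x)) := by
  simpa [Function.comp_def] using Real.lipschitzWith_sigmoid.comp (lipschitzWith_smul (-β))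

lemma Matrix.IsSymm.exists_unitary_diagonal {m : Type*} [Fintype m] [DecidableEq m]
    {X : Matrix m m ℝ} (hX : X.IsSymm) :
    ∃ U ∈ unitaryGroup m ℝ, ∃ d : m → ℝ, X = U * diagonal d * star U := by
  have hH : X.IsHermitian := isHermitian_iff_isSymm.mpr hX
  exact ⟨_, hH.eigenvectorUnitary.2, hH.eigenvalues, by simpa using hH.spectral_theorem⟩

section FermiDirac

variable {k : ℕ}

lemma fermiDirac_conj_diagonal (β : ℝ) {U : Matrix (Fin k) (Fin k) ℝ}
    (hU : U ∈ unitaryGroup (Fin k) ℝ) (d : Fin k → ℝ) :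
    fermiDirac β (U * diagonal d * star U) =
      U * diagonal ((fun x => Real.sigmoid (-(β * x))) ∘ d) * star U := by
  have hU_inv : U⁻¹ = star U := inv_eq_left_inv (Unitary.star_mul_self_of_mem hU)
  have hstar_inv : (star U)⁻¹ = U := inv_eq_left_inv (Unitary.mul_star_self_of_mem hU)
  have hexp : NormedSpace.exp (β • (U * diagonal d * star U)) =
      U * diagonal (fun i => Real.exp (β * d i)) * star U := by
    rw [← hU_inv, ← smul_mul_assoc, ← mul_smul_comm, ← diagonal_smul,
      Matrix.exp_conj _ _ (Unitary.isUnit_coe (U := ⟨U, hU⟩)), exp_diagonal]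
    congr
    ext i
    simp [Real.exp_eq_exp_ℝ]
  have hone_add : 1 + U * diagonal (fun i => Real.exp (β * d i)) * star U =
      U * diagonal (fun i => 1 + Real.exp (β * d i)) * star U := by
    have hdiag : diagonal (fun i => 1 + Real.exp (β * d i)) =
        1 + diagonal fun i => Real.exp (β * d i) := by
      rw [← diagonal_one, diagonal_add]
    rw [hdiag, Matrix.mul_add, Matrix.add_mul, Matrix.mul_one, Unitary.mul_star_self_of_mem hU]
  have hdiag_inv : (diagonal fun i => 1 + Real.exp (β * d i))⁻¹ =
      diagonal ((fun x => Real.sigmoid (-(β * x))) ∘ d) := by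
    refine inv_eq_left_inv ?_
    rw [diagonal_mul_diagonal, ← diagonal_one]
    congr
    ext i
    simp only [Function.comp_apply, Real.sigmoid, neg_neg]
    exact inv_mul_cancel₀ (by positivity)
  rw [fermiDirac, hexp, hone_add, Matrix.mul_inv_rev, Matrix.mul_inv_rev, hstar_inv, hU_inv,
    hdiag_inv, Matrix.mul_assoc]

lemma isSymm_fermiDirac (β : ℝ) {X : Matrix (Fin k) (Fin k) ℝ} (hX : X.IsSymm) :
    (fermiDirac β X).IsSymm := by
  obtain ⟨U, hU, d, rfl⟩ := hX.exists_unitary_diagonal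
  rw [fermiDirac_conj_diagonal β hU, IsSymm]
  simp [transpose_mul, star_eq_conjTranspose, Matrix.mul_assoc]

end FermiDirac

section Frobenius

attribute [local instance] Matrix.frobeniusNormedAddCommGroup Matrix.frobeniusNormedSpace

variable {m n : Type*} [Fintype m] [Fintype n]

lemma frobenius_norm_sq_eq_sum (A : Matrix m n ℝ) : ‖A‖ ^ 2 = ∑ i, ∑ j, A i j ^ 2 := by
  rw [frobenius_norm_def, ← Real.sqrt_eq_rpow, Real.sq_sqrt (by positivity)]
  simp

lemma frobenius_norm_sq_eq_trace (A : Matrix m n ℝ) : ‖A‖ ^ 2 = (Aᵀ * A).trace := by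
  rw [frobenius_norm_sq_eq_sum, Finset.sum_comm]
  simp [trace, mul_apply, sq]

lemma frobNorm_eq_norm {k : ℕ} (A : Matrix (Fin k) (Fin k) ℝ) : frobNorm A = ‖A‖ := by
  rw [frobNorm, ← frobenius_norm_sq_eq_sum, Real.sqrt_sq (norm_nonneg _)]

lemma frobenius_norm_le_of_abs_apply_le {A B : Matrix m n ℝ} {K : ℝ} (hK : 0 ≤ K)
    (h : ∀ i j, |A i j| ≤ K * |B i j|) : ‖A‖ ≤ K * ‖B‖ := by
  refine (pow_le_pow_iff_left₀ (norm_nonneg _) (by positivity) two_ne_zero).mp ?_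
  rw [mul_pow, frobenius_norm_sq_eq_sum, frobenius_norm_sq_eq_sum, Finset.mul_sum]
  gcongr with i _ j
  rw [Finset.mul_sum]
  gcongr with j
  rw [← sq_abs, ← sq_abs (B i j), ← mul_pow]
  exact pow_le_pow_left₀ (abs_nonneg _) (h i j) 2

lemma frobNorm_smul {k : ℕ} (c : ℝ) (A : Matrix (Fin k) (Fin k) ℝ) :
    frobNorm (c • A) = |c| * frobNorm A := by
  rw [frobNorm_eq_norm, frobNorm_eq_norm, norm_smul, Real.norm_eq_abs]

variable [DecidableEq m]

lemma frobenius_norm_unitary_mul {U : Matrix m m ℝ} (hU : U ∈ unitaryGroup m ℝ)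
    (A : Matrix m n ℝ) : ‖U * A‖ = ‖A‖ := by
  have hUU : Uᵀ * U = 1 := by
    simpa [star_eq_conjTranspose] using mem_unitaryGroup_iff'.mp hU
  refine (pow_left_inj₀ (norm_nonneg _) (norm_nonneg _) two_ne_zero).mp ?_
  rw [frobenius_norm_sq_eq_trace, frobenius_norm_sq_eq_trace, transpose_mul, Matrix.mul_assoc,
    ← Matrix.mul_assoc Uᵀ, hUU, Matrix.one_mul]

lemma frobenius_norm_star_mul_mul {U V : Matrix m m ℝ} (hU : U ∈ unitaryGroup m ℝ)
    (hV : V ∈ unitaryGroup m ℝ) (A : Matrix m m ℝ) : ‖star U * A * V‖ = ‖A‖ := by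
  have hVt : Vᵀ ∈ unitaryGroup m ℝ := by
    simpa [star_eq_conjTranspose] using Unitary.star_mem hV
  rw [← frobenius_norm_transpose, transpose_mul, frobenius_norm_unitary_mul hVt,
    frobenius_norm_transpose, frobenius_norm_unitary_mul (Unitary.star_mem hU)]

lemma frobenius_norm_conj_diagonal_sub_le {g : ℝ → ℝ} {K : NNReal} (hg : LipschitzWith K g)
    {U V : Matrix m m ℝ} (hU : U ∈ unitaryGroup m ℝ) (hV : V ∈ unitaryGroup m ℝ)
    (a b : m → ℝ) :
    ‖U * diagonal (g ∘ a) * star U - V * diagonal (g ∘ b) * star V‖ ≤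
      K * ‖U * diagonal a * star U - V * diagonal b * star V‖ := by
  have conj (c d : m → ℝ) : star U * (U * diagonal c * star U - V * diagonal d * star V) * V =
      of fun i j => (c i - d j) * (star U * V) i j := by
    calc _ = star U * U * diagonal c * (star U * V) - star U * V * diagonal d * (star V * V) := by
          noncomm_ring
      _ = _ := by
          ext i j
          simp [Unitary.star_mul_self_of_mem hU, Unitary.star_mul_self_of_mem hV, diagonal_mul,
            mul_diagonal, sub_mul, mul_comm]
  rw [← frobenius_norm_star_mul_mul hU hV, conj,
    ← frobenius_norm_star_mul_mul hU hV (U * diagonal a * star U - _), conj]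
  refine frobenius_norm_le_of_abs_apply_le K.2 fun i j => ?_
  simp only [of_apply, abs_mul, ← Real.dist_eq, Function.comp_apply, ← mul_assoc]
  exact mul_le_mul_of_nonneg_right (hg.dist_le_mul _ _) (abs_nonneg _)

lemma frobNorm_fermiDirac_sub_le {k : ℕ} (β : ℝ) {X Y : Matrix (Fin k) (Fin k) ℝ}
    (hX : X.IsSymm) (hY : Y.IsSymm) :
    frobNorm (fermiDirac β X - fermiDirac β Y) ≤ |β| / 4 * frobNorm (X - Y) := by
  obtain ⟨U, hU, a, rfl⟩ := hX.exists_unitary_diagonal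
  obtain ⟨V, hV, b, rfl⟩ := hY.exists_unitary_diagonal
  rw [fermiDirac_conj_diagonal β hU, fermiDirac_conj_diagonal β hV, frobNorm_eq_norm,
    frobNorm_eq_norm]
  have h := frobenius_norm_conj_diagonal_sub_le (Real.lipschitzWith_sigmoid_neg_mul β) hU hV a b
  simpa [div_eq_inv_mul] using h

end Frobenius

lemma tendsto_of_tendsto_frobNorm_sub {k : ℕ} {Z : ℕ → Matrix (Fin k) (Fin k) ℝ}
    {Z₀ : Matrix (Fin k) (Fin k) ℝ} (h : Tendsto (fun l => frobNorm (Z l - Z₀)) atTop (𝓝 0)) :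
    Tendsto Z atTop (𝓝 Z₀) := by
  let _ := Matrix.frobeniusNormedAddCommGroup (m := Fin k) (n := Fin k) (α := ℝ)
  -- the Frobenius norm induces the product topology definitionally
  exact tendsto_iff_norm_sub_tendsto_zero.mpr (by simpa only [frobNorm_eq_norm] using h)

/-- Convergence of the fixed-point iteration
`Z^{l+1} = Φ_β(H + λ(Z^l − Q + B) + r(Z^l − R + D))` to the fixed point `Z*`:
`‖Z^l − Z*‖_F ≤ (β(λ+r)/4)^l ‖Z^0 − Z*‖_F`, which shows exponential
convergence whenever `β(λ+r) < 4`. -/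
theorem stmt15 {n : ℕ} (β lam r : ℝ) (hβ : 0 < β) (hlam : 0 < lam) (hr : 0 < r)
    (H Q R B D : Matrix (Fin n) (Fin n) ℝ)
    (hH : H.IsSymm) (hQ : Q.IsSymm) (hR : R.IsSymm) (hB : B.IsSymm) (hD : D.IsSymm)
    (Zstar : Matrix (Fin n) (Fin n) ℝ) (hZstarSymm : Zstar.IsSymm)
    (hZstar : Zstar = fermiDirac β (H + lam • (Zstar - Q + B) + r • (Zstar - R + D)))
    (Z : ℕ → Matrix (Fin n) (Fin n) ℝ) (hZ0 : (Z 0).IsSymm)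
    (hZrec : ∀ l : ℕ,
      Z (l + 1) = fermiDirac β (H + lam • (Z l - Q + B) + r • (Z l - R + D))) :
    (∀ l : ℕ, frobNorm (Z l - Zstar) ≤ (β * (lam + r) / 4) ^ l * frobNorm (Z 0 - Zstar)) ∧
      (β * (lam + r) < 4 → Filter.Tendsto Z Filter.atTop (nhds Zstar)) := by
  set F : Matrix (Fin n) (Fin n) ℝ → Matrix (Fin n) (Fin n) ℝ :=
    fun S => H + lam • (S - Q + B) + r • (S - R + D) with hF
  have hF_symm (S : Matrix (Fin n) (Fin n) ℝ) (hS : S.IsSymm) : (F S).IsSymm :=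
    (hH.add (((hS.sub hQ).add hB).smul lam)).add (((hS.sub hR).add hD).smul r)
  have hF_sub (S T : Matrix (Fin n) (Fin n) ℝ) : F S - F T = (lam + r) • (S - T) := by
    simp only [hF]
    module
  set q := β * (lam + r) / 4 with hq
  have hZ_symm (l : ℕ) : (Z l).IsSymm := by
    induction l with
    | zero => exact hZ0
    | succ l ih => exact hZrec l ▸ isSymm_fermiDirac β (hF_symm _ ih)
  have hstep (l : ℕ) : frobNorm (Z (l + 1) - Zstar) ≤ q * frobNorm (Z l - Zstar) := by
    have h := frobNorm_fermiDirac_sub_le β (hF_symm _ (hZ_symm l)) (hF_symm _ hZstarSymm)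
    rw [← hZrec l, ← hZstar, hF_sub, frobNorm_smul, abs_of_pos hβ,
      abs_of_pos (add_pos hlam hr)] at h
    exact h.trans_eq (by ring)
  have hbound (l : ℕ) : frobNorm (Z l - Zstar) ≤ q ^ l * frobNorm (Z 0 - Zstar) :=
    le_geom (u := fun l => frobNorm (Z l - Zstar)) (by positivity) l fun j _ => hstep j
  refine ⟨hbound, fun hlt => tendsto_of_tendsto_frobNorm_sub ?_⟩
  have hgeom := (tendsto_pow_atTop_nhds_zero_of_lt_one (r := q) (by positivity)
    (by rw [hq]; linarith)).mul_const (frobNorm (Z 0 - Zstar))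
  rw [zero_mul] at hgeom
  exact squeeze_zero (fun l => Real.sqrt_nonneg _) hbound hgeom
end

section
/- Let λ_1, …, λ_n be real numbers, let N be an integer with 0 < N < n, and let β > 0. Then there exists a unique μ ∈ ℝ such that Σ_{i=1}^n (1 + exp(β(λ_i − μ)))⁻¹ = N. -/
open BigOperators

/-- Existence and uniqueness of the chemical potential: for
real numbers `λ_1, …, λ_n`, an integer `0 < N < n`, and `β > 0`, there is a
unique `μ ∈ ℝ` with `∑_{i=1}^n (1 + e^{β(λ_i − μ)})⁻¹ = N`. -/
theorem stmt18 {n N : ℕ} (hN0 : 0 < N) (hNn : N < n)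
    (lam : Fin n → ℝ) (β : ℝ) (hβ : 0 < β) :
    ∃! μ : ℝ, ∑ i, (1 + Real.exp (β * (lam i - μ)))⁻¹ = (N : ℝ) := by
  set f : ℝ → ℝ := fun μ => ∑ i, (1 + Real.exp (β * (lam i - μ)))⁻¹ with hf
  have hpos : ∀ (x : ℝ) (i : Fin n), 0 < 1 + Real.exp (β * (lam i - x)) := by
    intro x i; positivity
  have hnpos : 0 < n := hN0.trans hNn
  have hmono : StrictMono f := by
    intro a b hab
    apply Finset.sum_lt_sum_of_nonempty
    · have : Nonempty (Fin n) := Fin.pos_iff_nonempty.mp hnpos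
      exact Finset.univ_nonempty
    · intro i _
      have hexp : Real.exp (β * (lam i - b)) < Real.exp (β * (lam i - a)) := by
        apply Real.exp_lt_exp.mpr; nlinarith
      have := hpos b i
      apply inv_strictAnti₀ (hpos b i)
      linarith
  have hcont : Continuous f := by
    apply continuous_finset_sum
    intro i _
    exact (continuous_const.add (Real.continuous_exp.comp (by continuity))).inv₀
      fun x => (hpos x i).ne'
  have harg : ∀ i : Fin n, Filter.Tendsto (fun μ : ℝ => β * (lam i - μ))
      Filter.atTop Filter.atBot := by
    intro i
    apply Filter.Tendsto.const_mul_atBot hβ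
    apply Filter.tendsto_atBot_add_const_left
    exact Filter.tendsto_neg_atTop_atBot
  have harg' : ∀ i : Fin n, Filter.Tendsto (fun μ : ℝ => β * (lam i - μ))
      Filter.atBot Filter.atTop := by
    intro i
    apply Filter.Tendsto.const_mul_atTop hβ
    apply Filter.tendsto_atTop_add_const_left
    exact Filter.tendsto_neg_atBot_atTop
  have htop : Filter.Tendsto f Filter.atTop (nhds n) := by
    have h : Filter.Tendsto f Filter.atTop (nhds (∑ _i : Fin n, (1:ℝ))) := by
      apply tendsto_finset_sum
      intro i _
      have h2 : Filter.Tendsto (fun μ : ℝ => Real.exp (β * (lam i - μ)))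
          Filter.atTop (nhds 0) := Real.tendsto_exp_atBot.comp (harg i)
      have := (tendsto_const_nhds.add h2).inv₀ (by norm_num : (1:ℝ) + 0 ≠ 0)
      simpa using this
    simpa using h
  have hbot : Filter.Tendsto f Filter.atBot (nhds 0) := by
    have h : Filter.Tendsto f Filter.atBot (nhds (∑ _i : Fin n, (0:ℝ))) := by
      apply tendsto_finset_sum
      intro i _
      have h2 : Filter.Tendsto (fun μ : ℝ => Real.exp (β * (lam i - μ)))
          Filter.atBot Filter.atTop := Real.tendsto_exp_atTop.comp (harg' i)
      exact tendsto_inv_atTop_zero.comp (Filter.tendsto_atTop_add_const_left _ _ h2)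
    simpa using h
  have hNn' : (N : ℝ) < n := by exact_mod_cast hNn
  have hN0' : (0 : ℝ) < N := by exact_mod_cast hN0
  obtain ⟨a, ha⟩ := (hbot.eventually (eventually_lt_nhds hN0')).exists
  obtain ⟨b, hb⟩ := (htop.eventually (eventually_gt_nhds hNn')).exists
  have hab : a < b := by
    by_contra h
    push_neg at h
    exact absurd (hmono.le_iff_le.mpr h) (by linarith)
  obtain ⟨μ, _, hμ⟩ := intermediate_value_Icc hab.le hcont.continuousOn
    ⟨ha.le, hb.le⟩
  exact ⟨μ, hμ, fun ν hν => hmono.injective (hν.trans hμ.symm)⟩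
end
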